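/- arXiv:2102.04979 — 6 statements merged into one kernel-verified Lean document; each statement's English description precedes it below -/
import Mathlib

section
/- Let λ be a partition such that s_{λ/(k)} = s_{λ/(1^k)} for every nonnegative integer k (with the convention s_{λ/μ} = 0 when μ ⊄ λ); equivalently, for every k and every finitely supported sequence α of nonnegative integers, the number of SSYT of shape λ/(k) of type α equals the number of SSYT of shape λ/(1^k) of type α. Then λ = (n, n−1, …, 1) for some nonnegative integer n. -/
open Finset

namespace Stembridge

/-- The staircase partition `ρ_n = (n, n-1, …, 1)` as a Young diagram
(cells `(i, j)` with `i + j < n`, matrix coordinates, 0-indexed). -/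
def staircase (n : ℕ) : YoungDiagram where
  cells := (Finset.range n ×ˢ Finset.range n).filter fun c => c.1 + c.2 < n
  isLowerSet := by
    rintro ⟨i₁, j₁⟩ ⟨i₂, j₂⟩ hle hmem
    obtain ⟨hi, hj⟩ := hle
    simp only [Finset.mem_coe, Finset.mem_filter, Finset.mem_product, Finset.mem_range] at hmem ⊢
    omega

/-- The one-row partition `(k)` as a Young diagram. -/
def rowShape (k : ℕ) : YoungDiagram where
  cells := ({0} : Finset ℕ) ×ˢ Finset.range k
  isLowerSet := by
    rintro ⟨i₁, j₁⟩ ⟨i₂, j₂⟩ hle hmem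
    obtain ⟨hi, hj⟩ := hle
    simp only [Finset.mem_coe, Finset.mem_product, Finset.mem_singleton, Finset.mem_range] at hmem ⊢
    omega

/-- The one-column partition `(1^k)` as a Young diagram. -/
def colShape (k : ℕ) : YoungDiagram where
  cells := Finset.range k ×ˢ ({0} : Finset ℕ)
  isLowerSet := by
    rintro ⟨i₁, j₁⟩ ⟨i₂, j₂⟩ hle hmem
    obtain ⟨hi, hj⟩ := hle
    simp only [Finset.mem_coe, Finset.mem_product, Finset.mem_singleton, Finset.mem_range] at hmem ⊢
    omega

/-- The cells of the skew diagram `λ/μ`. -/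
def skewCells (μ lam : YoungDiagram) : Finset (ℕ × ℕ) := lam.cells \ μ.cells

/-- A reverse plane partition on a finite shape of cells: a filling of the cells with
positive integers which weakly increases along rows (left to right) and down columns.
Entries outside the shape are `0`. -/
structure RPP (shape : Finset (ℕ × ℕ)) where
  entry : ℕ × ℕ → ℕ
  pos : ∀ c ∈ shape, 0 < entry c
  zero_off : ∀ c, c ∉ shape → entry c = 0
  row_le : ∀ i j, (i, j) ∈ shape → (i, j + 1) ∈ shape → entry (i, j) ≤ entry (i, j + 1)
  col_le : ∀ i j, (i, j) ∈ shape → (i + 1, j) ∈ shape → entry (i, j) ≤ entry (i + 1, j)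

/-- The weight of a reverse plane partition: `weight P i` is the number of columns of the
shape containing an entry equal to `i`. -/
def RPP.weight {shape : Finset (ℕ × ℕ)} (P : RPP shape) (i : ℕ) : ℕ :=
  ((shape.filter fun c => P.entry c = i).image Prod.snd).card

/-- A set-valued tableau on a finite shape of cells: a filling of the cells by finite
nonempty sets of positive integers such that `max(left) ≤ min(right)` for horizontally
adjacent cells and `max(upper) < min(lower)` for vertically adjacent cells.
Cells outside the shape carry `∅`. -/
structure SVT (shape : Finset (ℕ × ℕ)) where
  entry : ℕ × ℕ → Finset ℕ
  nonempty : ∀ c ∈ shape, (entry c).Nonempty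
  pos : ∀ c ∈ shape, ∀ x ∈ entry c, 0 < x
  empty_off : ∀ c, c ∉ shape → entry c = ∅
  row_le : ∀ i j, (i, j) ∈ shape → (i, j + 1) ∈ shape →
    ∀ a ∈ entry (i, j), ∀ b ∈ entry (i, j + 1), a ≤ b
  col_lt : ∀ i j, (i, j) ∈ shape → (i + 1, j) ∈ shape →
    ∀ a ∈ entry (i, j), ∀ b ∈ entry (i + 1, j), a < b

/-- The content of a set-valued tableau: `content T i` is the number of cells whose
set contains `i`. -/
def SVT.content {shape : Finset (ℕ × ℕ)} (T : SVT shape) (i : ℕ) : ℕ :=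
  (shape.filter fun c => i ∈ T.entry c).card

/-- The reverse reading word of a set-valued tableau: read the columns from rightmost to
leftmost, each column from top to bottom, the elements within a cell in decreasing order. -/
def SVT.word {shape : Finset (ℕ × ℕ)} (T : SVT shape) : List ℕ :=
  ((List.range (shape.sup Prod.snd + 1)).reverse).flatMap fun j =>
    (List.range (shape.sup Prod.fst + 1)).flatMap fun i =>
      ((T.entry (i, j)).sort (· ≤ ·)).reverse

/-- A word is a lattice word if in every prefix, for every `a ≥ 1`, the number of
occurrences of `a+1` is at most the number of occurrences of `a` (equivalently, the `i`-th
occurrence of `a+1` comes after the `i`-th occurrence of `a`). -/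
def IsLatticeWord (w : List ℕ) : Prop :=
  ∀ t a, 1 ≤ a → (w.take t).count (a + 1) ≤ (w.take t).count a

/-- The content of the staircase partition `ρ_n` as a function: `a ↦ n + 1 - a`
(so `a ↦ 0` for `a > n`), for `a ≥ 1`. -/
def staircaseContent (n : ℕ) : ℕ → ℕ := fun a => n + 1 - a

/-- A semistandard Young tableau on a finite shape of cells: a filling with positive
integers weakly increasing along rows and strictly increasing down columns.
Entries outside the shape are `0`. -/
structure SSYT (shape : Finset (ℕ × ℕ)) where
  entry : ℕ × ℕ → ℕ
  pos : ∀ c ∈ shape, 0 < entry c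
  zero_off : ∀ c, c ∉ shape → entry c = 0
  row_le : ∀ i j, (i, j) ∈ shape → (i, j + 1) ∈ shape → entry (i, j) ≤ entry (i, j + 1)
  col_lt : ∀ i j, (i, j) ∈ shape → (i + 1, j) ∈ shape → entry (i, j) < entry (i + 1, j)

/-- The type of a semistandard Young tableau: `type T i` is the number of entries equal
to `i`. -/
def SSYT.type {shape : Finset (ℕ × ℕ)} (T : SSYT shape) (i : ℕ) : ℕ :=
  (shape.filter fun c => T.entry c = i).card

/-- The cells of the skew shape `ν∗μ`: `μ` occupies the lower-left block and `ν` the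
upper-right block, the top-right corner of `μ` touching the bottom-left corner of `ν`. -/
def starCells (ν μ : YoungDiagram) : Finset (ℕ × ℕ) :=
  ν.cells.image (fun c => (c.1, c.2 + μ.rowLen 0)) ∪
    μ.cells.image (fun c => (c.1 + ν.colLen 0, c.2))

/-- The number of reverse plane partitions of shape `λ/μ` with weight `w` (with the
convention that this is `0` if `μ ⊄ λ`). -/
noncomputable def rppCount (lam μ : YoungDiagram) (w : ℕ →₀ ℕ) : ℕ :=
  if μ.cells ⊆ lam.cells then
    Nat.card {P : RPP (skewCells μ lam) // ∀ i, 1 ≤ i → P.weight i = w i}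
  else 0

/-- The number of set-valued tableaux of shape `λ/μ` with content `m` (with the
convention that this is `0` if `μ ⊄ λ`). -/
noncomputable def svtCount (lam μ : YoungDiagram) (m : ℕ →₀ ℕ) : ℕ :=
  if μ.cells ⊆ lam.cells then
    Nat.card {T : SVT (skewCells μ lam) // ∀ i, 1 ≤ i → T.content i = m i}
  else 0

/-- The number of semistandard Young tableaux of shape `λ/μ` of type `α` (with the
convention that this is `0` if `μ ⊄ λ`). -/
noncomputable def ssytCount (lam μ : YoungDiagram) (α : ℕ →₀ ℕ) : ℕ :=
  if μ.cells ⊆ lam.cells then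
    Nat.card {T : SSYT (skewCells μ lam) // ∀ i, 1 ≤ i → T.type i = α i}
  else 0

/-- The number of set-valued tableaux of a given shape whose reverse reading word is a
lattice word with content `c` (indexed from 1). -/
noncomputable def latticeCount (shape : Finset (ℕ × ℕ)) (c : ℕ → ℕ) : ℕ :=
  Nat.card {T : SVT shape // IsLatticeWord T.word ∧ ∀ a, 1 ≤ a → T.word.count a = c a}

/-!
Let `λ` have first row of length `n` and `m` rows. Both `λ/(n)` (rows `λ₂, λ₃, …`) and `λ/(1^m)`
(rows `λ₁ - 1, λ₂ - 1, …`) are Young diagrams moved off the corner. In such a diagram an entry in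
its `t`-th row is at least `t`, so the type of every SSYT is dominated by the row lengths, and the
superstandard tableau (row `t` filled with `t`) is the only SSYT of its own type. Feeding the
superstandard type of one side into the hypothesis yields an SSYT of that type on the other
side, which forces `m = n` and mutual dominance of `(λ₂, λ₃, …)` and `(λ₁ - 1, λ₂ - 1, …)`.
Hence `λ_{t+1} = λ_t - 1` for all `t`.
-/

theorem card_filter_lt_eq_sum_card_filter_eq {α : Type*} (s : Finset α) (g : α → ℕ) (N : ℕ) :
    #{x ∈ s | g x < N} = ∑ t ∈ range N, #{x ∈ s | g x = t} := by
  classical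
  rw [card_eq_sum_card_fiberwise (f := g) (t := range N) fun x hx =>
    mem_range.mpr (mem_filter.mp hx).2]
  refine sum_congr rfl fun t ht => ?_
  rw [filter_filter]
  congr 1
  exact filter_congr fun x _ => ⟨And.right, fun h => ⟨h ▸ mem_range.mp ht, h⟩⟩

theorem SSYT.ext {shape : Finset (ℕ × ℕ)} {T T' : SSYT shape} (h : T.entry = T'.entry) :
    T = T' := by
  cases T; cases T'; cases h; rfl

theorem SSYT.card_filter_entry_le {S : Finset (ℕ × ℕ)} (T : SSYT S) (N : ℕ) :
    #{c ∈ S | T.entry c ≤ N} = ∑ t ∈ range N, T.type (t + 1) := by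
  have hpos := T.pos
  calc #{c ∈ S | T.entry c ≤ N} = #{c ∈ S | T.entry c - 1 < N} :=
        congrArg card (filter_congr fun c hc => by have := hpos c hc; omega)
    _ = ∑ t ∈ range N, #{c ∈ S | T.entry c - 1 = t} := card_filter_lt_eq_sum_card_filter_eq ..
    _ = ∑ t ∈ range N, T.type (t + 1) :=
        sum_congr rfl fun t _ =>
          congrArg card (filter_congr fun c hc => by have := hpos c hc; omega)

noncomputable def SSYT.typeFinsupp {S : Finset (ℕ × ℕ)} (T : SSYT S) : ℕ →₀ ℕ :=
  ∑ c ∈ S, Finsupp.single (T.entry c) 1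

theorem SSYT.typeFinsupp_apply {S : Finset (ℕ × ℕ)} (T : SSYT S) (i : ℕ) :
    T.typeFinsupp i = T.type i := by
  classical
  simp only [typeFinsupp, Finsupp.finsetSum_apply, Finsupp.single_apply, SSYT.type, card_filter]

/-- `S` is the Young diagram with row lengths `f 0 ≥ f 1 ≥ ⋯`, translated so that its corner
cell is `(a, b)`. -/
structure IsDiagramAt (a b : ℕ) (f : ℕ → ℕ) (S : Finset (ℕ × ℕ)) : Prop where
  antitone : Antitone f
  mem_iff : ∀ i j, (i, j) ∈ S ↔ a ≤ i ∧ b ≤ j ∧ j - b < f (i - a)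

namespace IsDiagramAt

variable {a b : ℕ} {f : ℕ → ℕ} {S : Finset (ℕ × ℕ)}

theorem le_fst (hS : IsDiagramAt a b f S) {c : ℕ × ℕ} (hc : c ∈ S) : a ≤ c.1 :=
  ((hS.mem_iff c.1 c.2).mp hc).1

theorem mem_of_le (hS : IsDiagramAt a b f S) {i i' j : ℕ} (hij : (i, j) ∈ S)
    (ha : a ≤ i') (hi : i' ≤ i) : (i', j) ∈ S := by
  rw [hS.mem_iff] at hij ⊢
  exact ⟨ha, hij.2.1, hij.2.2.trans_le (hS.antitone (by omega))⟩

theorem card_filter_fst_eq (hS : IsDiagramAt a b f S) (t : ℕ) :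
    #{c ∈ S | c.1 - a = t} = f t := by
  have hrow : {c ∈ S | c.1 - a = t} = (range (f t)).image fun j => (a + t, b + j) := by
    ext ⟨i, j⟩
    simp only [mem_filter, hS.mem_iff, mem_image, mem_range, Prod.mk.injEq]
    constructor
    · rintro ⟨⟨hi, hj, hlt⟩, rfl⟩
      exact ⟨j - b, hlt, by omega, by omega⟩
    · rintro ⟨j', hj', rfl, rfl⟩
      refine ⟨⟨by omega, by omega, ?_⟩, by omega⟩
      simpa using hj'
  rw [hrow, card_image_of_injective _ fun j j' h => by simpa using h, card_range]

theorem card_filter_fst_lt (hS : IsDiagramAt a b f S) (N : ℕ) :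
    #{c ∈ S | c.1 - a < N} = ∑ t ∈ range N, f t := by
  rw [card_filter_lt_eq_sum_card_filter_eq]
  exact sum_congr rfl fun t _ => hS.card_filter_fst_eq t

theorem sub_add_one_le_entry (hS : IsDiagramAt a b f S) (T : SSYT S) {c : ℕ × ℕ}
    (hc : c ∈ S) : c.1 - a + 1 ≤ T.entry c := by
  obtain ⟨i, j⟩ := c
  induction i with
  | zero => have := T.pos _ hc; omega
  | succ i ih =>
    by_cases hi : a ≤ i
    · have hup : (i, j) ∈ S := hS.mem_of_le hc hi (Nat.le_succ i)
      have := T.col_lt i j hup hc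
      have := ih hup
      omega
    · have := T.pos _ hc
      omega

theorem filter_entry_le_subset (hS : IsDiagramAt a b f S) (T : SSYT S) (N : ℕ) :
    {c ∈ S | T.entry c ≤ N} ⊆ {c ∈ S | c.1 - a < N} := by
  intro c hc
  rw [mem_filter] at hc ⊢
  have := hS.sub_add_one_le_entry T hc.1
  have := hS.le_fst hc.1
  exact ⟨hc.1, by omega⟩

theorem sum_range_type_le (hS : IsDiagramAt a b f S) (T : SSYT S) (N : ℕ) :
    ∑ t ∈ range N, T.type (t + 1) ≤ ∑ t ∈ range N, f t := by
  rw [← T.card_filter_entry_le, ← hS.card_filter_fst_lt]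
  exact card_le_card (hS.filter_entry_le_subset T N)

theorem entry_eq_of_type (hS : IsDiagramAt a b f S) {T : SSYT S}
    (hT : ∀ t, T.type (t + 1) = f t) {c : ℕ × ℕ} (hc : c ∈ S) : T.entry c = c.1 - a + 1 := by
  set N := c.1 - a + 1 with hN
  have hcard : #{c ∈ S | c.1 - a < N} ≤ #{c ∈ S | T.entry c ≤ N} := by
    rw [T.card_filter_entry_le, hS.card_filter_fst_lt, sum_congr rfl fun t _ => hT t]
  have hrows := eq_of_subset_of_card_le (hS.filter_entry_le_subset T N) hcard
  have hmem : c ∈ {c ∈ S | T.entry c ≤ N} := by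
    rw [hrows]
    exact mem_filter.mpr ⟨hc, Nat.lt_succ_self _⟩
  have hle := (mem_filter.mp hmem).2
  have := hS.sub_add_one_le_entry T hc
  omega

def superstandard (hS : IsDiagramAt a b f S) : SSYT S where
  entry c := if c ∈ S then c.1 - a + 1 else 0
  pos c hc := by simp [hc]
  zero_off c hc := by simp [hc]
  row_le i j h h' := by simp [h, h']
  col_lt i j h h' := by
    have := hS.le_fst h
    simp only [h, h', if_true]
    omega

theorem superstandard_type (hS : IsDiagramAt a b f S) (t : ℕ) :
    hS.superstandard.type (t + 1) = f t := by
  rw [← hS.card_filter_fst_eq t, SSYT.type]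
  congr 1
  exact filter_congr fun c hc => by simp [superstandard, hc]

theorem eq_superstandard (hS : IsDiagramAt a b f S) {T : SSYT S}
    (hT : ∀ t, T.type (t + 1) = f t) : T = hS.superstandard := by
  refine SSYT.ext (funext fun c => ?_)
  by_cases hc : c ∈ S
  · simp [hS.entry_eq_of_type hT hc, superstandard, hc]
  · simp [T.zero_off c hc, superstandard, hc]

theorem type_eq_of_type_eq_superstandard (hS : IsDiagramAt a b f S) {S' : Finset (ℕ × ℕ)}
    {T : SSYT S'} (hT : ∀ i, 1 ≤ i → T.type i = hS.superstandard.typeFinsupp i) (t : ℕ) :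
    T.type (t + 1) = f t := by
  rw [hT (t + 1) (Nat.le_add_left 1 t), SSYT.typeFinsupp_apply, hS.superstandard_type]

theorem card_ssyt_type_superstandard (hS : IsDiagramAt a b f S) :
    Nat.card {T : SSYT S // ∀ i, 1 ≤ i → T.type i = hS.superstandard.typeFinsupp i} = 1 := by
  refine Nat.card_eq_one_iff_unique.mpr ⟨⟨fun T T' => Subtype.ext ?_⟩,
    ⟨⟨hS.superstandard, fun i _ => (SSYT.typeFinsupp_apply _ i).symm⟩⟩⟩
  rw [hS.eq_superstandard (hS.type_eq_of_type_eq_superstandard T.2),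
    hS.eq_superstandard (hS.type_eq_of_type_eq_superstandard T'.2)]

/-- The left side is `1`, by uniqueness of the superstandard tableau. -/
theorem exists_ssyt_of_ssytCount_eq {lam μ ν : YoungDiagram} (hμ : μ.cells ⊆ lam.cells)
    (hS : IsDiagramAt a b f (skewCells μ lam))
    (h : ssytCount lam μ hS.superstandard.typeFinsupp =
      ssytCount lam ν hS.superstandard.typeFinsupp) :
    ν.cells ⊆ lam.cells ∧ ∃ T : SSYT (skewCells ν lam), ∀ t, T.type (t + 1) = f t := by
  rw [ssytCount, if_pos hμ, hS.card_ssyt_type_superstandard, ssytCount] at h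
  split_ifs at h with hν
  obtain ⟨⟨T, hT⟩⟩ := (Nat.card_pos_iff.mp (h ▸ Nat.one_pos)).1
  exact ⟨hν, T, hS.type_eq_of_type_eq_superstandard hT⟩

end IsDiagramAt

theorem rowShape_cells_subset_iff (lam : YoungDiagram) {k : ℕ} :
    (rowShape k).cells ⊆ lam.cells ↔ k ≤ lam.rowLen 0 := by
  simp only [rowShape, subset_iff, mem_product, mem_singleton, mem_range,
    YoungDiagram.mem_cells, Prod.forall]
  constructor
  · intro hk
    cases k with
    | zero => exact Nat.zero_le _
    | succ k => exact YoungDiagram.mem_iff_lt_rowLen.mp (hk 0 k ⟨rfl, Nat.lt_succ_self k⟩)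
  · rintro hk i j ⟨rfl, hj⟩
    exact YoungDiagram.mem_iff_lt_rowLen.mpr (by omega)

theorem colShape_cells_subset_iff (lam : YoungDiagram) {k : ℕ} :
    (colShape k).cells ⊆ lam.cells ↔ k ≤ lam.colLen 0 := by
  simp only [colShape, subset_iff, mem_product, mem_singleton, mem_range,
    YoungDiagram.mem_cells, Prod.forall]
  constructor
  · intro hk
    cases k with
    | zero => exact Nat.zero_le _
    | succ k => exact YoungDiagram.mem_iff_lt_colLen.mp (hk k 0 ⟨Nat.lt_succ_self k, rfl⟩)
  · rintro hk i j ⟨hi, rfl⟩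
    exact YoungDiagram.mem_iff_lt_colLen.mpr (by omega)

theorem isDiagramAt_skewCells_rowShape (lam : YoungDiagram) :
    IsDiagramAt 1 0 (fun t => lam.rowLen (t + 1)) (skewCells (rowShape (lam.rowLen 0)) lam) where
  antitone s t hst := lam.rowLen_anti _ _ (by omega)
  mem_iff i j := by
    simp only [skewCells, mem_sdiff, YoungDiagram.mem_cells, YoungDiagram.mem_iff_lt_rowLen,
      rowShape, mem_product, mem_singleton, mem_range]
    cases i <;> simp

theorem isDiagramAt_skewCells_colShape (lam : YoungDiagram) :
    IsDiagramAt 0 1 (fun t => lam.rowLen t - 1) (skewCells (colShape (lam.colLen 0)) lam) where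
  antitone s t hst := Nat.sub_le_sub_right (lam.rowLen_anti s t hst) 1
  mem_iff i j := by
    have hrow : 0 < lam.rowLen i ↔ i < lam.colLen 0 := by
      rw [← YoungDiagram.mem_iff_lt_rowLen, YoungDiagram.mem_iff_lt_colLen]
    simp only [skewCells, mem_sdiff, YoungDiagram.mem_cells, YoungDiagram.mem_iff_lt_rowLen,
      colShape, mem_product, mem_singleton, mem_range, Nat.sub_zero]
    omega

theorem eq_staircase_of_rowLen_succ {lam : YoungDiagram}
    (hstep : ∀ t, lam.rowLen (t + 1) = lam.rowLen t - 1) : lam = staircase (lam.rowLen 0) := by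
  have hrow : ∀ t, lam.rowLen t = lam.rowLen 0 - t := fun t => by
    induction t with
    | zero => rfl
    | succ t ih => rw [hstep t, ih]; omega
  ext ⟨i, j⟩
  rw [YoungDiagram.mem_cells, YoungDiagram.mem_iff_lt_rowLen, hrow i]
  simp only [staircase, mem_filter, mem_product, mem_range]
  omega

/-- If `s_{λ/(k)} = s_{λ/(1^k)}` for every nonnegative integer `k` (with the convention
that `s_{λ/μ} = 0` when `μ ⊄ λ`), i.e. for every `k` and every finitely supported
sequence `α`, the number of SSYT of shape `λ/(k)` of type `α` equals the number of SSYT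
of shape `λ/(1^k)` of type `α`, then `λ` is a staircase `(n, n-1, …, 1)`. -/
theorem staircase_of_ssyt_row_col_eq (lam : YoungDiagram)
    (h : ∀ (k : ℕ) (α : ℕ →₀ ℕ),
      ssytCount lam (rowShape k) α = ssytCount lam (colShape k) α) :
    ∃ n : ℕ, lam = staircase n := by
  have hA := isDiagramAt_skewCells_rowShape lam
  have hB := isDiagramAt_skewCells_colShape lam
  obtain ⟨hcol, hTB⟩ := hA.exists_ssyt_of_ssytCount_eq
    ((rowShape_cells_subset_iff lam).mpr le_rfl) (h _ _)
  obtain ⟨hrow, hTA⟩ := hB.exists_ssyt_of_ssytCount_eq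
    ((colShape_cells_subset_iff lam).mpr le_rfl) (h _ _).symm
  have hlen : lam.rowLen 0 = lam.colLen 0 :=
    le_antisymm ((colShape_cells_subset_iff lam).mp hcol) ((rowShape_cells_subset_iff lam).mp hrow)
  rw [hlen] at hTB
  rw [← hlen] at hTA
  obtain ⟨TB, hTB⟩ := hTB
  obtain ⟨TA, hTA⟩ := hTA
  have hsum : ∀ N, ∑ t ∈ range N, lam.rowLen (t + 1) = ∑ t ∈ range N, (lam.rowLen t - 1) :=
    fun N => le_antisymm (by simpa only [hTB] using hB.sum_range_type_le TB N)
      (by simpa only [hTA] using hA.sum_range_type_le TA N)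
  refine ⟨_, eq_staircase_of_rowLen_succ fun t => ?_⟩
  have := hsum (t + 1)
  rw [sum_range_succ, sum_range_succ, hsum t] at this
  omega

end Stembridge
end

section
/- Let λ be a partition such that s_{λ/μ} = s_{λ/μ^T} for every partition μ (with the convention s_{λ/μ} = 0 when μ ⊄ λ); equivalently, for every μ and every finitely supported sequence α of nonnegative integers, the number of SSYT of shape λ/μ of type α equals the number of SSYT of shape λ/μ^T of type α. Then λ = (n, n−1, …, 1) for some nonnegative integer n. -/
open Finset

namespace Stembridge

lemma ssyt_ext {s : Finset (ℕ × ℕ)} {T T' : SSYT s} (h : T.entry = T'.entry) : T = T' := by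
  cases T; cases T'; cases h; rfl

lemma entry_eq_one {s : Finset (ℕ × ℕ)} (T : SSYT s)
    (hT : ∀ i, 1 ≤ i → T.type i = (Finsupp.single 1 2 : ℕ →₀ ℕ) i)
    {c : ℕ × ℕ} (hc : c ∈ s) : T.entry c = 1 := by
  by_contra hne
  have hpos := T.pos c hc
  have h0 : T.type (T.entry c) = 0 := by
    rw [hT _ (by omega), Finsupp.single_apply, if_neg (by omega)]
  have hmem : c ∈ s.filter fun c' => T.entry c' = T.entry c := by
    simp [hc]
  unfold SSYT.type at h0
  rw [Finset.card_eq_zero] at h0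
  rw [h0] at hmem
  exact absurd hmem (Finset.notMem_empty c)

lemma horiz_card (i0 k : ℕ) :
    Nat.card {T : SSYT ({(i0, k), (i0, k+1)} : Finset (ℕ × ℕ)) //
      ∀ i, 1 ≤ i → T.type i = (Finsupp.single 1 2 : ℕ →₀ ℕ) i} = 1 := by
  have hcard : ({(i0, k), (i0, k+1)} : Finset (ℕ × ℕ)).card = 2 := by
    rw [Finset.card_insert_of_notMem (by simp), Finset.card_singleton]
  rw [Nat.card_eq_one_iff_unique]
  constructor
  · constructor
    rintro ⟨T, hT⟩ ⟨T', hT'⟩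
    apply Subtype.ext
    apply ssyt_ext
    funext c
    by_cases hc : c ∈ ({(i0, k), (i0, k+1)} : Finset (ℕ × ℕ))
    · rw [entry_eq_one T hT hc, entry_eq_one T' hT' hc]
    · rw [T.zero_off c hc, T'.zero_off c hc]
  · refine ⟨⟨⟨fun c => if c ∈ ({(i0, k), (i0, k+1)} : Finset (ℕ × ℕ)) then 1 else 0,
      ?_, ?_, ?_, ?_⟩, ?_⟩⟩
    · intro c hc; rw [if_pos hc]; exact one_pos
    · intro c hc; rw [if_neg hc]
    · intro i j h1 h2; rw [if_pos h1, if_pos h2]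
    · intro i j h1 h2
      exfalso
      simp only [Finset.mem_insert, Finset.mem_singleton, Prod.mk.injEq] at h1 h2
      omega
    · intro i hi
      show (Finset.filter _ _).card = _
      rcases eq_or_lt_of_le hi with h1 | h1
      · have hf : (({(i0, k), (i0, k+1)} : Finset (ℕ × ℕ)).filter
            fun c => (if c ∈ ({(i0, k), (i0, k+1)} : Finset (ℕ × ℕ)) then 1 else 0) = i)
            = ({(i0, k), (i0, k+1)} : Finset (ℕ × ℕ)) := by
          apply Finset.filter_true_of_mem
          intro c hc; rw [if_pos hc, ← h1]
        subst h1
        rw [hf, hcard]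
        simp
      · have hf : (({(i0, k), (i0, k+1)} : Finset (ℕ × ℕ)).filter
            fun c => (if c ∈ ({(i0, k), (i0, k+1)} : Finset (ℕ × ℕ)) then 1 else 0) = i)
            = (∅ : Finset (ℕ × ℕ)) := by
          apply Finset.filter_false_of_mem
          intro c hc; rw [if_pos hc]; omega
        rw [hf, Finset.card_empty, Finsupp.single_apply, if_neg (by omega)]

lemma vert_empty (i0 k : ℕ) :
    Nat.card {T : SSYT ({(k, i0), (k+1, i0)} : Finset (ℕ × ℕ)) //
      ∀ i, 1 ≤ i → T.type i = (Finsupp.single 1 2 : ℕ →₀ ℕ) i} = 0 := by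
  have : IsEmpty {T : SSYT ({(k, i0), (k+1, i0)} : Finset (ℕ × ℕ)) //
      ∀ i, 1 ≤ i → T.type i = (Finsupp.single 1 2 : ℕ →₀ ℕ) i} := by
    constructor
    rintro ⟨T, hT⟩
    have h1 := entry_eq_one T hT (show ((k : ℕ), i0) ∈ _ by simp)
    have h2 := entry_eq_one T hT (show ((k+1 : ℕ), i0) ∈ _ by simp)
    have hlt := T.col_lt k i0 (by simp) (by simp)
    rw [h1, h2] at hlt
    exact lt_irrefl 1 hlt
  exact Nat.card_of_isEmpty

lemma ssytCount_self (lam : YoungDiagram) : ssytCount lam lam 0 = 1 := by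
  rw [ssytCount, if_pos (subset_refl _)]
  have hs : skewCells lam lam = ∅ := Finset.sdiff_self _
  rw [hs, Nat.card_eq_one_iff_unique]
  constructor
  · constructor
    rintro ⟨T, hT⟩ ⟨T', hT'⟩
    apply Subtype.ext
    apply ssyt_ext
    funext c
    rw [T.zero_off c (Finset.notMem_empty c), T'.zero_off c (Finset.notMem_empty c)]
  · refine ⟨⟨⟨fun _ => 0, ?_, ?_, ?_, ?_⟩, ?_⟩⟩
    · intro c hc; exact absurd hc (Finset.notMem_empty c)
    · intro c _; rfl
    · intro i j h1 _; exact absurd h1 (Finset.notMem_empty _)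
    · intro i j h1 _; exact absurd h1 (Finset.notMem_empty _)
    · intro i _; simp [SSYT.type]


/-- If `s_{λ/μ} = s_{λ/μᵀ}` for every partition `μ` (with the convention that
`s_{λ/μ} = 0` when `μ ⊄ λ`), i.e. for every `μ` and every finitely supported sequence
`α`, the number of SSYT of shape `λ/μ` of type `α` equals the number of SSYT of shape
`λ/μᵀ` of type `α`, then `λ` is a staircase `(n, n-1, …, 1)`. -/
theorem staircase_of_ssyt_transpose_eq (lam : YoungDiagram)
    (h : ∀ (μ : YoungDiagram) (α : ℕ →₀ ℕ),
      ssytCount lam μ α = ssytCount lam μ.transpose α) :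
    ∃ n : ℕ, lam = staircase n := by
  -- Step A: lam is self-conjugate
  have hA : lam.transpose = lam := by
    have h0 := h lam 0
    rw [ssytCount_self] at h0
    have hsub : lam.transpose.cells ⊆ lam.cells := by
      by_contra hns
      rw [ssytCount, if_neg hns] at h0
      exact one_ne_zero h0
    have hcardT : lam.transpose.cells.card = lam.cells.card := by
      simp [YoungDiagram.transpose, Equiv.finsetCongr_apply]
    exact YoungDiagram.ext (Finset.eq_of_subset_of_card_le hsub (le_of_eq hcardT.symm))
  have hmemswap : ∀ i j : ℕ, (i, j) ∈ lam ↔ (j, i) ∈ lam := by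
    intro i j
    conv_rhs => rw [← hA]
    rw [YoungDiagram.mem_transpose]
    simp
  -- Step B: consecutive row lengths differ by at most 1
  have hC : ∀ i, lam.rowLen i ≤ lam.rowLen (i + 1) + 1 := by
    intro i0
    by_contra hcon
    push_neg at hcon
    obtain ⟨k, hk⟩ : ∃ k, lam.rowLen i0 = k + 2 := ⟨lam.rowLen i0 - 2, by omega⟩
    have hnext : lam.rowLen (i0 + 1) ≤ k := by omega
    set D : Finset (ℕ × ℕ) := {(i0, k), (i0, k + 1)} with hDdef
    have hD1 : (i0, k) ∈ lam.cells := by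
      rw [YoungDiagram.mem_cells, YoungDiagram.mem_iff_lt_rowLen]; omega
    have hD2 : (i0, k + 1) ∈ lam.cells := by
      rw [YoungDiagram.mem_cells, YoungDiagram.mem_iff_lt_rowLen]; omega
    have hDsub : D ⊆ lam.cells := by
      intro c hc
      rcases Finset.mem_insert.1 hc with rfl | hc
      · exact hD1
      · rw [Finset.mem_singleton] at hc; subst hc; exact hD2
    obtain ⟨μ, hμcells⟩ : ∃ μ : YoungDiagram, μ.cells = lam.cells \ D := by
      refine ⟨⟨lam.cells \ D, ?_⟩, rfl⟩
      rintro ⟨c, d⟩ ⟨a, b⟩ ⟨hac, hbd⟩ hm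
      simp only [Finset.mem_coe, Finset.mem_sdiff, hDdef, Finset.mem_insert,
        Finset.mem_singleton, Prod.mk.injEq] at hm ⊢
      obtain ⟨hcd, hnotD⟩ := hm
      have hab : (a, b) ∈ lam.cells := by
        have := lam.isLowerSet (Prod.mk_le_mk.mpr ⟨hac, hbd⟩) (Finset.mem_coe.2 hcd)
        exact Finset.mem_coe.1 this
      refine ⟨hab, ?_⟩
      have hd : d < lam.rowLen c := YoungDiagram.mem_iff_lt_rowLen.1
        ((YoungDiagram.mem_cells _).1 hcd)
      intro hD'
      rcases Nat.lt_or_ge i0 c with hlt | hge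
      · have := lam.rowLen_anti (i0 + 1) c hlt
        rcases hD' with ⟨ha, hb⟩ | ⟨ha, hb⟩ <;> omega
      · have hceq : c = i0 := by rcases hD' with ⟨ha, hb⟩ | ⟨ha, hb⟩ <;> omega
        rw [hceq] at hd
        rcases hD' with ⟨ha, hb⟩ | ⟨ha, hb⟩ <;> omega
    have hμsub : μ.cells ⊆ lam.cells := by rw [hμcells]; exact Finset.sdiff_subset
    have hskew : skewCells μ lam = D := by
      rw [skewCells, hμcells, sdiff_sdiff_right_self]
      exact Finset.inter_eq_right.2 hDsub
    have hcount1 : ssytCount lam μ (Finsupp.single 1 2) = 1 := by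
      rw [ssytCount, if_pos hμsub, hskew, hDdef]
      exact horiz_card i0 k
    have heq := h μ (Finsupp.single 1 2)
    rw [hcount1] at heq
    by_cases hT : μ.transpose.cells ⊆ lam.cells
    · have hskewT : skewCells μ.transpose lam
          = ({(k, i0), (k + 1, i0)} : Finset (ℕ × ℕ)) := by
        ext ⟨i, j⟩
        have hμT : ((i, j) ∈ μ.transpose.cells) ↔
            ((j, i) ∈ lam.cells ∧ ¬((j, i) = ((i0 : ℕ), k) ∨ (j, i) = ((i0 : ℕ), k + 1))) := by
          rw [YoungDiagram.mem_cells, YoungDiagram.mem_transpose]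
          show (j, i) ∈ μ ↔ _
          rw [← YoungDiagram.mem_cells, hμcells, Finset.mem_sdiff, hDdef]
          simp
        simp only [skewCells, Finset.mem_sdiff, hμT, Finset.mem_insert, Finset.mem_singleton]
        constructor
        · rintro ⟨hij, hn⟩
          have hji : (j, i) ∈ lam.cells := (YoungDiagram.mem_cells _).2
            ((hmemswap i j).1 ((YoungDiagram.mem_cells _).1 hij))
          have hor : (j, i) = ((i0 : ℕ), k) ∨ (j, i) = ((i0 : ℕ), k + 1) := by
            by_contra hcon2
            exact hn ⟨hji, hcon2⟩
          simp only [Prod.mk.injEq] at hor ⊢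
          omega
        · rintro (h' | h') <;> simp only [Prod.mk.injEq] at h' <;>
            obtain ⟨h1, h2⟩ := h'
          · subst h1; subst h2
            exact ⟨(YoungDiagram.mem_cells _).2 ((hmemswap _ _).2
              ((YoungDiagram.mem_cells _).1 hD1)), by simp⟩
          · subst h1; subst h2
            exact ⟨(YoungDiagram.mem_cells _).2 ((hmemswap _ _).2
              ((YoungDiagram.mem_cells _).1 hD2)), by simp⟩
      rw [ssytCount, if_pos hT, hskewT, vert_empty] at heq
      exact one_ne_zero heq
    · rw [ssytCount, if_neg hT] at heq
      exact one_ne_zero heq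
  -- Step C: parts are distinct
  have hcol : ∀ j, lam.colLen j = lam.rowLen j := by
    intro j
    rw [← YoungDiagram.rowLen_transpose, hA]
  have hDlt : ∀ i, 0 < lam.rowLen (i + 1) → lam.rowLen (i + 1) < lam.rowLen i := by
    intro i hp
    by_contra hcon
    push_neg at hcon
    have hle := lam.rowLen_anti i (i + 1) (Nat.le_succ i)
    have hs : lam.rowLen (i + 1) = lam.rowLen i := le_antisymm hle hcon
    set s := lam.rowLen i with hsdef
    have hs0 : 0 < s := by omega
    have h1 : i + 1 < lam.colLen (s - 1) := by
      rw [← YoungDiagram.mem_iff_lt_colLen]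
      rw [YoungDiagram.mem_iff_lt_rowLen]
      omega
    have h2 : lam.colLen s ≤ i := by
      by_contra hc2
      push_neg at hc2
      have hmem : (i, s) ∈ lam := YoungDiagram.mem_iff_lt_colLen.2 hc2
      rw [YoungDiagram.mem_iff_lt_rowLen] at hmem
      omega
    have h3 : lam.colLen (s - 1) ≤ lam.colLen (s - 1 + 1) + 1 := by
      rw [hcol, hcol]; exact hC (s - 1)
    have h4 : s - 1 + 1 = s := by omega
    rw [h4] at h3
    omega
  -- Conclusion
  refine ⟨lam.rowLen 0, ?_⟩
  have hrow : ∀ i, lam.rowLen i = lam.rowLen 0 - i := by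
    intro i
    induction i with
    | zero => simp
    | succ i ih =>
      have c1 := hC i
      have hle := lam.rowLen_anti i (i + 1) (Nat.le_succ i)
      rcases Nat.eq_zero_or_pos (lam.rowLen (i + 1)) with h0 | hp
      · omega
      · have := hDlt i hp
        omega
  apply YoungDiagram.ext
  ext ⟨i, j⟩
  rw [YoungDiagram.mem_cells, YoungDiagram.mem_iff_lt_rowLen, hrow i]
  simp only [staircase, Finset.mem_filter, Finset.mem_product, Finset.mem_range]
  omega

end Stembridge
end

section
/- Let λ be a partition such that g_{λ/μ} = g_{λ/μ^T} for every partition μ (with the convention g_{λ/μ} = 0 when μ ⊄ λ); equivalently, for every μ and every finitely supported sequence w of nonnegative integers, the number of reverse plane partitions of shape λ/μ with weight w equals the number of reverse plane partitions of shape λ/μ^T with weight w. Then λ = (n, n−1, …, 1) for some nonnegative integer n. -/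
open Finset

namespace Stembridge

-- auxiliary
theorem RPP.ext' {shape : Finset (ℕ × ℕ)} {P Q : RPP shape} (h : P.entry = Q.entry) : P = Q := by
  cases P; cases Q; cases h; rfl

def RPP.ones (shape : Finset (ℕ × ℕ)) : RPP shape where
  entry c := if c ∈ shape then 1 else 0
  pos c hc := by simp [hc]
  zero_off c hc := by simp [hc]
  row_le i j h1 h2 := by simp [h1, h2]
  col_le i j h1 h2 := by simp [h1, h2]

theorem RPP.eq_ones {shape : Finset (ℕ × ℕ)} (P : RPP shape)
    (h : ∀ i, 2 ≤ i → P.weight i = 0) : P = RPP.ones shape := by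
  apply RPP.ext'
  funext c
  by_cases hc : c ∈ shape
  · have hpos := P.pos c hc
    have : P.entry c = 1 := by
      by_contra hne
      have h2 : 2 ≤ P.entry c := by omega
      have h0 := h _ h2
      rw [RPP.weight, Finset.card_eq_zero, Finset.image_eq_empty] at h0
      have : c ∈ shape.filter fun c' => P.entry c' = P.entry c := by simp [hc]
      rw [h0] at this
      exact absurd this (Finset.notMem_empty c)
    simp [this, RPP.ones, hc]
  · simp [P.zero_off c hc, RPP.ones, hc]

theorem RPP.ones_weight_one (shape : Finset (ℕ × ℕ)) :
    (RPP.ones shape).weight 1 = (shape.image Prod.snd).card := by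
  rw [RPP.weight]
  congr 2
  apply Finset.filter_true_of_mem
  intro c hc
  simp [RPP.ones, hc]

theorem RPP.ones_weight (shape : Finset (ℕ × ℕ)) (i : ℕ) (hi : 2 ≤ i) :
    (RPP.ones shape).weight i = 0 := by
  rw [RPP.weight, Finset.card_eq_zero, Finset.image_eq_empty, Finset.filter_eq_empty_iff]
  intro c hc
  simp only [RPP.ones, hc, if_pos]
  omega

/-- key counting lemma -/
theorem rppCount_single (lam μ : YoungDiagram) (hsub : μ.cells ⊆ lam.cells) :
    rppCount lam μ (Finsupp.single 1 (((skewCells μ lam)).image Prod.snd).card) = 1 := by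
  rw [rppCount, if_pos hsub]
  set sh := skewCells μ lam
  have hw : ∀ i, 1 ≤ i → (RPP.ones sh).weight i
      = Finsupp.single 1 ((sh.image Prod.snd).card) i := by
    intro i hi
    rcases Nat.lt_or_ge i 2 with h2 | h2
    · interval_cases i
      rw [RPP.ones_weight_one, Finsupp.single_eq_same]
    · rw [RPP.ones_weight sh i h2, Finsupp.single_apply, if_neg (by omega)]
  haveI : Unique {P : RPP sh // ∀ i, 1 ≤ i → P.weight i
      = Finsupp.single 1 ((sh.image Prod.snd).card) i} := by
    refine ⟨⟨⟨RPP.ones sh, hw⟩⟩, ?_⟩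
    rintro ⟨P, hP⟩
    refine Subtype.ext ?_
    apply RPP.eq_ones
    intro i hi
    rw [hP i (by omega), Finsupp.single_apply, if_neg (by omega)]
  exact Nat.card_unique

theorem cols_eq (lam : YoungDiagram)
    (h : ∀ (μ : YoungDiagram) (w : ℕ →₀ ℕ), rppCount lam μ w = rppCount lam μ.transpose w)
    (μ : YoungDiagram) (hsub : μ.cells ⊆ lam.cells) :
    μ.transpose.cells ⊆ lam.cells ∧
      ((skewCells μ.transpose lam).image Prod.snd).card
        = ((skewCells μ lam).image Prod.snd).card := by
  set c := ((skewCells μ lam).image Prod.snd).card with hc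
  have h1 := rppCount_single lam μ hsub
  have h2 := h μ (Finsupp.single 1 c)
  rw [h1] at h2
  by_cases hT : μ.transpose.cells ⊆ lam.cells
  · refine ⟨hT, ?_⟩
    rw [rppCount, if_pos hT] at h2
    obtain ⟨⟨P, hP⟩, -⟩ := Nat.card_eq_one_iff_exists.mp h2.symm
    have hPo : P = RPP.ones (skewCells μ.transpose lam) := by
      apply RPP.eq_ones
      intro i hi
      rw [hP i (by omega), Finsupp.single_apply, if_neg (by omega)]
    have := hP 1 le_rfl
    rw [hPo, RPP.ones_weight_one, Finsupp.single_eq_same] at this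
    exact this
  · rw [rppCount, if_neg hT] at h2
    exact absurd h2 one_ne_zero


theorem rowcol (lam : YoungDiagram)
    (h : ∀ (μ : YoungDiagram) (w : ℕ →₀ ℕ), rppCount lam μ w = rppCount lam μ.transpose w)
    (μ : YoungDiagram) (hsub : μ.cells ⊆ lam.cells) :
    ((skewCells μ lam).image Prod.fst).card = ((skewCells μ lam).image Prod.snd).card := by
  have hself : lam.transpose = lam := by
    have h1 : lam.transpose ≤ lam := (cols_eq lam h lam (subset_refl _)).1
    refine le_antisymm h1 ?_
    have := YoungDiagram.transpose_mono h1
    rwa [YoungDiagram.transpose_transpose] at this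
  obtain ⟨hT, hcols⟩ := cols_eq lam h μ hsub
  have hmem : ∀ c : ℕ × ℕ, c ∈ skewCells μ.transpose lam ↔ c.swap ∈ skewCells μ lam := by
    intro c
    simp only [skewCells, Finset.mem_sdiff, YoungDiagram.mem_cells,
      YoungDiagram.mem_transpose]
    have : c ∈ lam ↔ c.swap ∈ lam := by
      conv_lhs => rw [← hself]
      rw [YoungDiagram.mem_transpose]
    rw [this]
  have hswap : skewCells μ.transpose lam = (skewCells μ lam).image Prod.swap := by
    ext c
    rw [hmem]
    constructor
    · intro hcs
      exact Finset.mem_image.mpr ⟨c.swap, hcs, Prod.swap_swap c⟩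
    · intro hcs
      obtain ⟨d, hd, rfl⟩ := Finset.mem_image.mp hcs
      simpa using hd
  rw [hswap, Finset.image_image] at hcols
  have : Prod.snd ∘ Prod.swap = (Prod.fst : ℕ × ℕ → ℕ) := rfl
  rw [this] at hcols
  exact hcols

theorem step1 (lam : YoungDiagram)
    (D : ∀ μ : YoungDiagram, μ.cells ⊆ lam.cells →
      ((skewCells μ lam).image Prod.fst).card = ((skewCells μ lam).image Prod.snd).card)
    (i : ℕ) : lam.rowLen i ≤ lam.rowLen (i + 1) + 1 := by
  set r := lam.rowLen (i + 1) with hr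
  set R := lam.rowLen i with hR
  have hanti : ∀ a, i + 1 ≤ a → lam.rowLen a ≤ r := fun a ha => lam.rowLen_anti _ _ ha
  set μc : Finset (ℕ × ℕ) := lam.cells.filter fun c => c.1 = i → c.2 < r with hμc
  have hlow : IsLowerSet (↑μc : Set (ℕ × ℕ)) := by
    rintro ⟨a, b⟩ ⟨a', b'⟩ ⟨(ha : a' ≤ a), (hb : b' ≤ b)⟩ hmem
    simp only [hμc, Finset.coe_filter, Set.mem_setOf_eq, YoungDiagram.mem_cells] at hmem ⊢
    obtain ⟨hlam, hcond⟩ := hmem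
    refine ⟨lam.up_left_mem ha hb hlam, ?_⟩
    intro heq
    rcases Nat.lt_or_ge a (i + 1) with hai | hai
    · have hx : a = i := by omega
      have := hcond hx
      omega
    · have hbl : b < lam.rowLen a := YoungDiagram.mem_iff_lt_rowLen.mp hlam
      have := hanti a hai
      omega
  set μ : YoungDiagram := ⟨μc, hlow⟩ with hμ
  have hsub : μ.cells ⊆ lam.cells := Finset.filter_subset _ _
  have hskew : skewCells μ lam = lam.cells.filter fun c => c.1 = i ∧ r ≤ c.2 := by
    ext c
    simp only [skewCells, Finset.mem_sdiff, hμ, hμc, Finset.mem_filter]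
    constructor
    · rintro ⟨hl, hnot⟩
      push_neg at hnot
      exact ⟨hl, (hnot hl).1, (hnot hl).2⟩
    · rintro ⟨hl, heq, hge⟩
      exact ⟨hl, by push_neg; exact fun _ => ⟨heq, hge⟩⟩
  have hsnd : (skewCells μ lam).image Prod.snd = Finset.Ico r R := by
    ext b
    simp only [hskew, Finset.mem_image, Finset.mem_filter, Finset.mem_Ico,
      YoungDiagram.mem_cells, Prod.exists]
    constructor
    · rintro ⟨a, b', ⟨hl, rfl, hge⟩, rfl⟩
      exact ⟨hge, YoungDiagram.mem_iff_lt_rowLen.mp hl⟩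
    · rintro ⟨hge, hlt⟩
      exact ⟨i, b, ⟨YoungDiagram.mem_iff_lt_rowLen.mpr hlt, rfl, hge⟩, rfl⟩
  have hfst : (skewCells μ lam).image Prod.fst ⊆ {i} := by
    intro a ha
    simp only [hskew, Finset.mem_image, Finset.mem_filter, Prod.exists] at ha
    obtain ⟨a', b', ⟨_, rfl, _⟩, rfl⟩ := ha
    simp
  have hD := D μ hsub
  rw [hsnd, Nat.card_Ico] at hD
  have := Finset.card_le_card hfst
  simp only [Finset.card_singleton] at this
  omega


theorem no_equal (lam : YoungDiagram)
    (D : ∀ μ : YoungDiagram, μ.cells ⊆ lam.cells →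
      ((skewCells μ lam).image Prod.fst).card = ((skewCells μ lam).image Prod.snd).card)
    (i : ℕ) (h1 : 1 ≤ lam.rowLen (i + 1)) : lam.rowLen i ≠ lam.rowLen (i + 1) := by
  intro hcon
  have hbound : ∀ k, 1 ≤ lam.rowLen (k + 1) → k < lam.colLen 0 := by
    intro k hk
    have hm : (k + 1, 0) ∈ lam := YoungDiagram.mem_iff_lt_rowLen.mpr (by omega)
    have := YoungDiagram.mem_iff_lt_colLen.mp hm
    omega
  set F := (Finset.range (lam.colLen 0)).filter
    (fun k => 1 ≤ lam.rowLen (k + 1) ∧ lam.rowLen k = lam.rowLen (k + 1)) with hF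
  have hFne : F.Nonempty :=
    ⟨i, Finset.mem_filter.mpr ⟨Finset.mem_range.mpr (hbound i h1), h1, hcon⟩⟩
  set j := F.max' hFne with hj
  obtain ⟨-, hj1, hj2⟩ := Finset.mem_filter.mp (F.max'_mem hFne)
  set m := lam.rowLen (j + 1) with hm
  have hnext : lam.rowLen (j + 2) < m := by
    by_contra hge
    push_neg at hge
    have heq : lam.rowLen (j + 2) = m := le_antisymm (lam.rowLen_anti _ _ (by omega)) hge
    have heq' : lam.rowLen (j + 1 + 1) = m := by
      rw [show j + 1 + 1 = j + 2 from rfl]; exact heq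
    have hmemF : j + 1 ∈ F := Finset.mem_filter.mpr
      ⟨Finset.mem_range.mpr (hbound (j + 1) (by omega)), by omega, by omega⟩
    have := F.le_max' _ hmemF
    omega
  have hRj : lam.rowLen j = m := hj2
  set μc : Finset (ℕ × ℕ) :=
    lam.cells.filter fun c => (c.1 = j ∨ c.1 = j + 1) → c.2 < m - 1 with hμc
  have hlow : IsLowerSet (↑μc : Set (ℕ × ℕ)) := by
    rintro ⟨a, b⟩ ⟨a', b'⟩ ⟨(ha : a' ≤ a), (hb : b' ≤ b)⟩ hmem
    simp only [hμc, Finset.coe_filter, Set.mem_setOf_eq, YoungDiagram.mem_cells] at hmem ⊢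
    obtain ⟨hlam, hcond⟩ := hmem
    refine ⟨lam.up_left_mem ha hb hlam, ?_⟩
    intro heq
    rcases Nat.lt_or_ge a (j + 2) with hai | hai
    · have hx : a = j ∨ a = j + 1 := by omega
      have := hcond hx
      omega
    · have hbl : b < lam.rowLen a := YoungDiagram.mem_iff_lt_rowLen.mp hlam
      have := lam.rowLen_anti (j + 2) a hai
      omega
  set μ : YoungDiagram := ⟨μc, hlow⟩ with hμ
  have hsub : μ.cells ⊆ lam.cells := Finset.filter_subset _ _
  have hskew : skewCells μ lam = {(j, m - 1), (j + 1, m - 1)} := by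
    ext ⟨a, b⟩
    simp only [skewCells, Finset.mem_sdiff, hμ, hμc, Finset.mem_filter,
      YoungDiagram.mem_cells, Finset.mem_insert, Finset.mem_singleton, Prod.mk.injEq]
    constructor
    · rintro ⟨hl, hnot⟩
      push_neg at hnot
      obtain ⟨hor, hge⟩ := hnot hl
      have hbl : b < lam.rowLen a := YoungDiagram.mem_iff_lt_rowLen.mp hl
      rcases hor with rfl | rfl
      · left; exact ⟨rfl, by omega⟩
      · right; exact ⟨rfl, by omega⟩
    · rintro (⟨rfl, rfl⟩ | ⟨rfl, rfl⟩)
      · refine ⟨YoungDiagram.mem_iff_lt_rowLen.mpr (by omega), ?_⟩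
        push_neg
        exact fun _ => ⟨Or.inl rfl, by omega⟩
      · refine ⟨YoungDiagram.mem_iff_lt_rowLen.mpr (by omega), ?_⟩
        push_neg
        exact fun _ => ⟨Or.inr rfl, by omega⟩
  have hD := D μ hsub
  rw [hskew] at hD
  have hfst : ({(j, m - 1), (j + 1, m - 1)} : Finset (ℕ × ℕ)).image Prod.fst
      = {j, j + 1} := by
    simp [Finset.image_insert]
  have hsnd : ({(j, m - 1), (j + 1, m - 1)} : Finset (ℕ × ℕ)).image Prod.snd
      = {m - 1} := by
    simp [Finset.image_insert]
  rw [hfst, hsnd, Finset.card_singleton, Finset.card_insert_of_notMem (by simp),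
    Finset.card_singleton] at hD
  omega

/-- If `g_{λ/μ} = g_{λ/μᵀ}` for every partition `μ` (with the convention that
`g_{λ/μ} = 0` when `μ ⊄ λ`), i.e. for every `μ` and every finitely supported sequence
`w`, the number of reverse plane partitions of shape `λ/μ` with weight `w` equals the
number of reverse plane partitions of shape `λ/μᵀ` with weight `w`, then `λ` is a
staircase `(n, n-1, …, 1)`. -/
theorem staircase_of_rpp_transpose_eq (lam : YoungDiagram)
    (h : ∀ (μ : YoungDiagram) (w : ℕ →₀ ℕ),
      rppCount lam μ w = rppCount lam μ.transpose w) :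
    ∃ n : ℕ, lam = staircase n := by
  have D := rowcol lam h
  have hstep := step1 lam D
  have hne := no_equal lam D
  have hsucc : ∀ i, 1 ≤ lam.rowLen i → lam.rowLen i = lam.rowLen (i + 1) + 1 := by
    intro i hi
    have h1 := hstep i
    have h2 := lam.rowLen_anti i (i + 1) (by omega)
    rcases Nat.lt_or_ge (lam.rowLen (i + 1)) (lam.rowLen i) with hlt | hge
    · omega
    · exact absurd (le_antisymm hge h2) (hne i (by omega))
  set n := lam.rowLen 0 with hn
  refine ⟨n, ?_⟩
  have key : ∀ i, lam.rowLen i = n - i := by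
    intro i
    induction i with
    | zero => simp [hn]
    | succ k ih =>
      rcases Nat.eq_zero_or_pos (lam.rowLen k) with h0 | hpos
      · have : lam.rowLen (k + 1) ≤ lam.rowLen k := lam.rowLen_anti k (k + 1) (by omega)
        omega
      · have := hsucc k hpos
        omega
  ext ⟨a, b⟩
  simp only [YoungDiagram.mem_cells, staircase, YoungDiagram.mem_mk, Finset.mem_filter,
    Finset.mem_product, Finset.mem_range]
  rw [YoungDiagram.mem_iff_lt_rowLen, key a]
  omega


end Stembridge
end

section
/- Let ν and μ be partitions, let n be a positive integer, and let T be a set-valued tableau of shape ν∗μ such that the reverse reading word w(T) is a lattice word with content ρ_n = (n, n−1, …, 1). Then every cell in the i-th row of the ν-part of ν∗μ contains exactly the singleton set {i}. -/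
/-!
Go through the cells of `ν` in reading order; a cell of `ν` is preceded in the reading word only
by cells of `ν` (columns to its right, or above it). With rows 0-indexed, the claim is that the
cell in row `i` is `{i + 1}`. Column strictness against the cell above forces its entries to
exceed `i`. If it has a right neighbour in `ν`, that neighbour is `{i + 1}` and rows bound the
entries by `i + 1`. Otherwise every cell read earlier lies in a higher row, so all earlier letters
are at most `i`; the maximum `b` of the cell is the first of its letters to be read, and the lattice
condition demands an earlier `b - 1`, whence `b ≤ i + 1`.
-/

open Finset

namespace Stembridge

theorem IsLatticeWord.mem_of_append_succ_cons {p s : List ℕ} {a : ℕ}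
    (hw : IsLatticeWord (p ++ (a + 1) :: s)) (ha : 1 ≤ a) : a ∈ p := by
  have h := hw (p.length + 1) a ha
  simp only [List.take_append, List.take_of_length_le (Nat.le_succ _), Nat.add_sub_cancel_left,
    List.take_succ_cons, List.take_zero, List.count_append, List.count_singleton_self,
    List.count_singleton, beq_iff_eq, Nat.succ_ne_self, if_false] at h
  exact List.count_pos_iff.1 (by omega)

theorem _root_.List.range_eq_append_cons {i n : ℕ} (h : i < n) :
    List.range n = List.range i ++ i :: List.range' (i + 1) (n - (i + 1)) := by
  obtain ⟨k, rfl⟩ := Nat.exists_eq_add_of_lt h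
  rw [List.range_eq_range', List.range_eq_range', show i + k + 1 = i + (k + 1) by omega,
    ← List.range'_append]
  simp [List.range'_succ]
  omega

theorem _root_.Finset.exists_sort_reverse_eq_max'_cons {α : Type*} [LinearOrder α] (s : Finset α)
    (h : s.Nonempty) : ∃ l, (s.sort (· ≤ ·)).reverse = s.max' h :: l := by
  have hl : s.sort (· ≤ ·) ≠ [] := List.ne_nil_of_mem ((s.mem_sort _).2 (s.max'_mem h))
  refine ⟨(s.sort (· ≤ ·)).dropLast.reverse, ?_⟩
  conv_lhs => rw [← List.dropLast_append_getLast hl]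
  rw [List.reverse_append, Finset.max'_eq_sorted_last]
  simp [List.getLast_eq_getElem]

def ReadsBefore (c d : ℕ × ℕ) : Prop := d.2 < c.2 ∨ (c.2 = d.2 ∧ c.1 < d.1)

namespace SVT

variable {shape : Finset (ℕ × ℕ)} (T : SVT shape)

theorem exists_word_eq_append_max'_cons {c : ℕ × ℕ} (hc : c ∈ shape) :
    ∃ p s, T.word = p ++ (T.entry c).max' (T.nonempty c hc) :: s ∧
      ∀ y ∈ p, ∃ d, ReadsBefore d c ∧ y ∈ T.entry d := by
  obtain ⟨i, j⟩ := c
  set cell : ℕ → ℕ → List ℕ := fun i j => ((T.entry (i, j)).sort (· ≤ ·)).reverse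
  set column : ℕ → List ℕ := fun j => (List.range (shape.sup Prod.fst + 1)).flatMap (cell · j)
  have hi : i < shape.sup Prod.fst + 1 := Nat.lt_succ_of_le (Finset.le_sup (f := Prod.fst) hc)
  have hj : j < shape.sup Prod.snd + 1 := Nat.lt_succ_of_le (Finset.le_sup (f := Prod.snd) hc)
  obtain ⟨l, hl⟩ := (T.entry (i, j)).exists_sort_reverse_eq_max'_cons (T.nonempty _ hc)
  have hword : T.word = (List.range (shape.sup Prod.snd + 1)).reverse.flatMap column := rfl
  rw [List.range_eq_append_cons hj, List.reverse_append, List.reverse_cons] at hword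
  have hcol : column j = (List.range i).flatMap (cell · j) ++ cell i j ++
      (List.range' (i + 1) (shape.sup Prod.fst + 1 - (i + 1))).flatMap (cell · j) := by
    simp only [column, List.range_eq_append_cons hi, List.flatMap_append, List.flatMap_cons,
      List.append_assoc]
  simp only [List.flatMap_append, List.flatMap_cons, List.flatMap_nil, List.append_nil, hcol] at hword
  have hcell : cell i j = (T.entry (i, j)).max' (T.nonempty _ hc) :: l := hl
  simp only [hcell, List.append_assoc, List.cons_append] at hword
  rw [← List.append_assoc] at hword
  refine ⟨_, _, hword, ?_⟩
  simp only [List.mem_append, List.mem_flatMap, List.mem_reverse, List.mem_range'_1,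
    List.mem_range, column, cell, Finset.mem_sort]
  rintro y (⟨j', ⟨hj', -⟩, i', -, hy⟩ | ⟨i', hi', hy⟩)
  · exact ⟨(i', j'), Or.inl hj', hy⟩
  · exact ⟨(i', j), Or.inr ⟨rfl, hi'⟩, hy⟩

theorem max'_entry_le_of_isLatticeWord (hlat : IsLatticeWord T.word) {c : ℕ × ℕ} (hc : c ∈ shape)
    {m : ℕ} (hm : ∀ d, ReadsBefore d c → ∀ y ∈ T.entry d, y ≤ m) :
    (T.entry c).max' (T.nonempty c hc) ≤ m + 1 := by
  obtain ⟨p, s, hw, hp⟩ := T.exists_word_eq_append_max'_cons hc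
  by_contra! hb
  obtain ⟨k, hk⟩ := Nat.exists_eq_add_of_lt hb
  rw [hw, hk] at hlat
  obtain ⟨d, hd, hy⟩ := hp _ (hlat.mem_of_append_succ_cons (by omega))
  have := hm d hd _ hy
  omega

end SVT

theorem _root_.YoungDiagram.lt_rowLen_zero_of_mem {μ : YoungDiagram} {i j : ℕ} (h : (i, j) ∈ μ) :
    j < μ.rowLen 0 :=
  (μ.mem_iff_lt_rowLen.1 h).trans_le (μ.rowLen_anti 0 i (Nat.zero_le i))

section StarShape

variable {ν μ : YoungDiagram}

theorem add_rowLen_mem_starCells_iff {i j : ℕ} :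
    (i, j + μ.rowLen 0) ∈ starCells ν μ ↔ (i, j) ∈ ν.cells := by
  simp only [starCells, Finset.mem_union, Finset.mem_image, Prod.mk.injEq, Nat.add_right_cancel_iff]
  refine ⟨?_, fun h => Or.inl ⟨(i, j), h, rfl, rfl⟩⟩
  rintro (⟨⟨i', j'⟩, h, rfl, rfl⟩ | ⟨⟨i', j'⟩, h, -, rfl⟩)
  · exact h
  · have := YoungDiagram.lt_rowLen_zero_of_mem ((YoungDiagram.mem_cells _).1 h)
    omega

variable (T : SVT (starCells ν μ))

theorem entry_le_of_readsBefore_rowEnd {i j : ℕ} (hend : (i, j + 1) ∉ ν.cells)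
    (ih : ∀ i' j', (i', j') ∈ ν.cells → ReadsBefore (i', j') (i, j) →
      T.entry (i', j' + μ.rowLen 0) = {i' + 1}) :
    ∀ d, ReadsBefore d (i, j + μ.rowLen 0) → ∀ y ∈ T.entry d, y ≤ i := by
  rintro ⟨i', j'⟩ hd y hy
  have hd' : (i', j') ∈ starCells ν μ := by
    by_contra h
    simp [T.empty_off _ h] at hy
  simp only [ReadsBefore] at hd
  obtain ⟨k, rfl⟩ : ∃ k, j' = k + μ.rowLen 0 := ⟨j' - μ.rowLen 0, by omega⟩
  rw [add_rowLen_mem_starCells_iff] at hd'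
  have hread : ReadsBefore (i', k) (i, j) := by simp only [ReadsBefore]; omega
  have hi' : i' < i := by
    rcases hread with hk | ⟨rfl, hi'⟩
    · by_contra! hi
      exact hend (ν.up_left_mem hi hk hd')
    · exact hi'
  rw [ih i' k hd' hread, Finset.mem_singleton] at hy
  omega

theorem entry_eq_singleton_of_readsBefore (hlat : IsLatticeWord T.word) {i j : ℕ}
    (hij : (i, j) ∈ ν.cells)
    (ih : ∀ i' j', (i', j') ∈ ν.cells → ReadsBefore (i', j') (i, j) →
      T.entry (i', j' + μ.rowLen 0) = {i' + 1}) :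
    T.entry (i, j + μ.rowLen 0) = {i + 1} := by
  have hc : (i, j + μ.rowLen 0) ∈ starCells ν μ := add_rowLen_mem_starCells_iff.2 hij
  have hlow : ∀ x ∈ T.entry (i, j + μ.rowLen 0), i + 1 ≤ x := by
    intro x hx
    rcases i with _ | i
    · exact T.pos _ hc x hx
    · have hup : (i, j) ∈ ν.cells := ν.up_left_mem (Nat.le_succ i) le_rfl hij
      have habove := ih i j hup (Or.inr ⟨rfl, Nat.lt_succ_self i⟩)
      exact T.col_lt i _ (add_rowLen_mem_starCells_iff.2 hup) hc (i + 1) (by simp [habove]) x hx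
  have hhigh : (T.entry (i, j + μ.rowLen 0)).max' (T.nonempty _ hc) ≤ i + 1 := by
    by_cases hnext : (i, j + 1) ∈ ν.cells
    · have hnext' : (i, j + μ.rowLen 0 + 1) ∈ starCells ν μ := by
        rw [Nat.add_right_comm]
        exact add_rowLen_mem_starCells_iff.2 hnext
      have hright : T.entry (i, j + μ.rowLen 0 + 1) = {i + 1} := by
        rw [Nat.add_right_comm]
        exact ih i (j + 1) hnext (Or.inl (Nat.lt_succ_self j))
      exact T.row_le i _ hc hnext' _ (Finset.max'_mem _ _) (i + 1) (by simp [hright])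
    · exact T.max'_entry_le_of_isLatticeWord hlat hc (entry_le_of_readsBefore_rowEnd T hnext ih)
  refine Finset.eq_singleton_iff_nonempty_unique_mem.2 ⟨T.nonempty _ hc, fun x hx => ?_⟩
  exact le_antisymm ((Finset.le_max' _ x hx).trans hhigh) (hlow x hx)

end StarShape

theorem nu_part_rows_of_lattice_general (ν μ : YoungDiagram)
    (T : SVT (starCells ν μ)) (hlat : IsLatticeWord T.word) :
    ∀ i j, (i, j) ∈ ν.cells → T.entry (i, j + μ.rowLen 0) = {i + 1} := by
  -- on the cells of `ν`, the reading order is the lexicographic order of `(ν.rowLen 0 - j, i)`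
  suffices h : ∀ p : ℕ ×ₗ ℕ, ∀ i j, toLex (ν.rowLen 0 - j, i) = p → (i, j) ∈ ν.cells →
      T.entry (i, j + μ.rowLen 0) = {i + 1} from fun i j => h _ i j rfl
  intro p
  induction p using WellFoundedLT.induction with
  | _ p ih =>
  rintro i j rfl hij
  refine entry_eq_singleton_of_readsBefore T hlat hij fun i' j' hij' hread =>
    ih _ (Prod.Lex.toLex_lt_toLex.2 ?_) i' j' rfl hij'
  have := YoungDiagram.lt_rowLen_zero_of_mem ((YoungDiagram.mem_cells _).1 hij')
  rcases hread with hj | ⟨rfl, hi⟩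
  · exact Or.inl (by omega)
  · exact Or.inr ⟨rfl, hi⟩

/-- In a set-valued tableau of shape `ν∗μ` whose reverse reading word is a lattice word
with content `ρ_n = (n, n-1, …, 1)`, every cell in the `i`-th row of the `ν`-part
contains exactly the singleton `{i}` (here rows are 0-indexed, so the cell `(i, j)` of
`ν` carries the set `{i + 1}`). -/
theorem nu_part_rows_of_lattice (ν μ : YoungDiagram) (n : ℕ) (hn : 1 ≤ n)
    (T : SVT (starCells ν μ)) (hlat : IsLatticeWord T.word)
    (hcont : ∀ a, 1 ≤ a → T.word.count a = staircaseContent n a) :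
    ∀ i j, (i, j) ∈ ν.cells → T.entry (i, j + μ.rowLen 0) = {i + 1} :=
  nu_part_rows_of_lattice_general ν μ T hlat

end Stembridge
end

section
/- Let ν be a partition, let k and n be positive integers, and let T be a set-valued tableau of shape ν∗(k) such that the reverse reading word w(T) is a lattice word with content ρ_n = (n, n−1, …, 1). Then each of the numbers 1, 2, …, n occurs at most once in total among the sets filling the cells of the (k)-part of ν∗(k). -/
/-!
Suppose `a` lies in two cells `(r, j₁)`, `(r, j₂)` with `j₁ < j₂` of the row part. The columns
up to `j₂` consist of single cells of that row, whose entries weakly increase, so every letter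
read from the `a` of cell `(r, j₂)` onwards is at most `a`, and at least two of them equal `a`.
The lattice condition at the prefix before that `a` then gives `#a ≥ #(a+1) + 2` in the whole
word, while content `ρ_n` forces `#a = #(a+1) + 1`.
-/

open Finset

namespace Stembridge

theorem _root_.List.flatMap_eq_of_forall_ne_eq_nil {α β : Type*} {f : α → List β} {l : List α}
    (hl : l.Nodup) {r : α} (hr : r ∈ l) (hf : ∀ x ∈ l, x ≠ r → f x = []) :
    l.flatMap f = f r := by
  induction l with
  | nil => simp at hr
  | cons x xs ih =>
    obtain ⟨hx, hxs⟩ := List.nodup_cons.mp hl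
    rcases List.mem_cons.mp hr with rfl | hr
    · rw [List.flatMap_cons, List.flatMap_eq_nil_iff.mpr, List.append_nil]
      exact fun y hy => hf y (List.mem_cons_of_mem _ hy) (ne_of_mem_of_not_mem hy hx)
    · rw [List.flatMap_cons, hf x List.mem_cons_self (fun h => hx (h ▸ hr)), List.nil_append]
      exact ih hxs hr fun y hy => hf y (List.mem_cons_of_mem _ hy)

theorem _root_.List.exists_append_of_pairwise_ge {α : Type*} [LinearOrder α] {l : List α}
    (hl : l.Pairwise (· ≥ ·)) {a : α} (ha : a ∈ l) :
    ∃ l₁ l₂, l = l₁ ++ l₂ ∧ a ∈ l₂ ∧ ∀ x ∈ l₂, x ≤ a := by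
  induction l with
  | nil => simp at ha
  | cons b l ih =>
    by_cases hab : b ≤ a
    · exact ⟨[], b :: l, rfl, ha, fun x hx =>
        (List.mem_cons.mp hx).elim (· ▸ hab) fun hx => (List.rel_of_pairwise_cons hl hx).trans hab⟩
    · obtain ⟨l₁, l₂, rfl, h⟩ :=
        ih hl.of_cons ((List.mem_cons.mp ha).resolve_left (not_le.mp hab).ne)
      exact ⟨b :: l₁, l₂, rfl, h⟩

theorem IsLatticeWord.count_succ_add_count_drop_le {w : List ℕ} (hw : IsLatticeWord w)
    {a : ℕ} (ha : 1 ≤ a) (t : ℕ) (hle : ∀ x ∈ w.drop t, x ≤ a) :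
    w.count (a + 1) + (w.drop t).count a ≤ w.count a := by
  have hprefix := hw t a ha
  have hsuffix : (w.drop t).count (a + 1) = 0 :=
    List.count_eq_zero.mpr fun h => by have := hle _ h; omega
  have hsplit (b : ℕ) : w.count b = (w.take t).count b + (w.drop t).count b := by
    rw [← List.count_append, List.take_append_drop]
  rw [hsplit a, hsplit (a + 1)]
  omega

namespace SVT

variable {s : Finset (ℕ × ℕ)} (T : SVT s)

theorem mem_of_mem_entry {c : ℕ × ℕ} {x : ℕ} (hx : x ∈ T.entry c) : c ∈ s := by
  by_contra hc
  simp [T.empty_off c hc] at hx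

theorem row_le_of_lt {r j j' : ℕ} (hrow : ∀ m ≤ j', (r, m) ∈ s) (hj : j < j') {x y : ℕ}
    (hx : x ∈ T.entry (r, j)) (hy : y ∈ T.entry (r, j')) : x ≤ y := by
  induction j', hj using Nat.le_induction generalizing y with
  | base => exact T.row_le r j (hrow j (by omega)) (hrow _ le_rfl) x hx y hy
  | succ m hm ih =>
    obtain ⟨z, hz⟩ := T.nonempty _ (hrow m (by omega))
    exact (ih (fun i hi => hrow i (by omega)) hz).trans
      (T.row_le r m (hrow m (by omega)) (hrow _ le_rfl) z hz y hy)

def colWord (j : ℕ) : List ℕ :=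
  (List.range (s.sup Prod.fst + 1)).flatMap fun i => ((T.entry (i, j)).sort (· ≤ ·)).reverse

theorem word_eq_flatMap_colWord :
    T.word = (List.range (s.sup Prod.snd + 1)).reverse.flatMap T.colWord := rfl

theorem mem_colWord {j x : ℕ} : x ∈ T.colWord j ↔ ∃ i, x ∈ T.entry (i, j) := by
  simp only [colWord, List.mem_flatMap, List.mem_range, List.mem_reverse, Finset.mem_sort]
  refine ⟨fun ⟨i, _, hi⟩ => ⟨i, hi⟩, fun ⟨i, hi⟩ => ⟨i, ?_, hi⟩⟩
  have := Finset.le_sup (f := Prod.fst) (T.mem_of_mem_entry hi)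
  simp only at this
  omega

theorem colWord_eq_of_forall_eq {r j : ℕ} (hrj : (r, j) ∈ s) (hcol : ∀ i, (i, j) ∈ s → i = r) :
    T.colWord j = ((T.entry (r, j)).sort (· ≤ ·)).reverse := by
  have hr := Finset.le_sup (f := Prod.fst) hrj
  refine List.flatMap_eq_of_forall_ne_eq_nil List.nodup_range
    (List.mem_range.mpr (by simp only at hr; omega)) fun i _ hi => ?_
  rw [T.empty_off _ fun h => hi (hcol i h), Finset.sort_empty, List.reverse_nil]

theorem exists_word_eq_colWord_append {j : ℕ} (hj : j ≤ s.sup Prod.snd) :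
    ∃ u, T.word = u ++ T.colWord j ++ (List.range j).reverse.flatMap T.colWord := by
  refine ⟨((List.range (s.sup Prod.snd - j)).map (j + 1 + ·)).reverse.flatMap T.colWord, ?_⟩
  rw [word_eq_flatMap_colWord, show s.sup Prod.snd + 1 = j + 1 + (s.sup Prod.snd - j) by omega,
    List.range_add, List.reverse_append, List.range_succ, List.reverse_append]
  simp [List.append_assoc]

theorem exists_word_drop_forall_le {r j₁ j₂ a : ℕ} (hrow : ∀ j ≤ j₂, (r, j) ∈ s)
    (hcol : ∀ i j, (i, j) ∈ s → j ≤ j₂ → i = r) (hj : j₁ < j₂)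
    (h₁ : a ∈ T.entry (r, j₁)) (h₂ : a ∈ T.entry (r, j₂)) :
    ∃ t, 2 ≤ (T.word.drop t).count a ∧ ∀ x ∈ T.word.drop t, x ≤ a := by
  obtain ⟨u, hword⟩ :=
    T.exists_word_eq_colWord_append (Finset.le_sup (f := Prod.snd) (hrow j₂ le_rfl))
  rw [T.colWord_eq_of_forall_eq (hrow j₂ le_rfl) fun i h => hcol i j₂ h le_rfl] at hword
  have hsorted : ((T.entry (r, j₂)).sort (· ≤ ·)).reverse.Pairwise (· ≥ ·) :=
    List.pairwise_reverse.mpr (Finset.pairwise_sort _ _)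
  -- cut column `j₂` just before its `a`: everything read afterwards is at most `a`
  obtain ⟨l₁, l₂, hcut, ha₂, hle₂⟩ :=
    List.exists_append_of_pairwise_ge hsorted (by simpa using h₂)
  set R := (List.range j₂).reverse.flatMap T.colWord
  have hleR : ∀ x ∈ R, x ≤ a := by
    intro x hx
    obtain ⟨j, hj, hx⟩ := List.mem_flatMap.mp hx
    obtain ⟨i, hx⟩ := T.mem_colWord.mp hx
    rw [List.mem_reverse, List.mem_range] at hj
    obtain rfl := hcol i j (T.mem_of_mem_entry hx) hj.le
    exact T.row_le_of_lt hrow hj hx h₂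
  have haR : a ∈ R := List.mem_flatMap.mpr ⟨j₁, by simpa using hj, T.mem_colWord.mpr ⟨r, h₁⟩⟩
  have hword' : T.word = (u ++ l₁) ++ (l₂ ++ R) := by rw [hword, hcut]; simp
  refine ⟨(u ++ l₁).length, ?_, ?_⟩ <;> rw [hword', List.drop_left]
  · have := List.count_pos_iff.mpr ha₂
    have := List.count_pos_iff.mpr haR
    rw [List.count_append]
    omega
  · intro x hx
    exact (List.mem_append.mp hx).elim (hle₂ x) (hleR x)

end SVT

theorem rowLen_rowShape (k : ℕ) : (rowShape k).rowLen 0 = k :=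
  eq_of_forall_lt_iff fun j => by
    rw [← YoungDiagram.mem_iff_lt_rowLen]
    simp [rowShape]

theorem mem_starCells_rowShape (ν : YoungDiagram) {k j : ℕ} (hj : j < k) :
    (ν.colLen 0, j) ∈ starCells ν (rowShape k) :=
  Finset.mem_union_right _ (Finset.mem_image.mpr ⟨(0, j), by simp [rowShape, hj], by simp⟩)

theorem eq_colLen_of_mem_starCells_rowShape {ν : YoungDiagram} {k i j : ℕ}
    (h : (i, j) ∈ starCells ν (rowShape k)) (hj : j < k) : i = ν.colLen 0 := by
  simp only [starCells, rowLen_rowShape, Finset.mem_union, Finset.mem_image] at h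
  rcases h with ⟨c, -, hc⟩ | ⟨c, hc, hc'⟩
  · simp only [Prod.mk.injEq] at hc
    omega
  · simp only [rowShape, Finset.mem_product, Finset.mem_singleton] at hc
    simp only [Prod.mk.injEq] at hc'
    omega

theorem row_part_multiplicity_le_one_general (ν : YoungDiagram) (k n : ℕ)
    (T : SVT (starCells ν (rowShape k))) (hlat : IsLatticeWord T.word)
    (hcont : ∀ a, 1 ≤ a → T.word.count a = staircaseContent n a) :
    ∀ a, 1 ≤ a → a ≤ n →
      ((Finset.range k).filter fun j => a ∈ T.entry (ν.colLen 0, j)).card ≤ 1 := by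
  intro a ha _
  by_contra! hcard
  set S := (Finset.range k).filter fun j => a ∈ T.entry (ν.colLen 0, j)
  have hne : S.Nonempty := Finset.card_pos.mp (by omega)
  obtain ⟨hmin, ha₁⟩ := Finset.mem_filter.mp (S.min'_mem hne)
  obtain ⟨hmax, ha₂⟩ := Finset.mem_filter.mp (S.max'_mem hne)
  rw [Finset.mem_range] at hmin hmax
  obtain ⟨t, htwo, hle⟩ := T.exists_word_drop_forall_le
    (fun j hj => mem_starCells_rowShape ν (by omega))
    (fun i j h hj => eq_colLen_of_mem_starCells_rowShape h (by omega))
    (S.min'_lt_max'_of_card hcard) ha₁ ha₂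
  have := hlat.count_succ_add_count_drop_le ha t hle
  rw [hcont a ha, hcont (a + 1) (by omega), staircaseContent, staircaseContent] at this
  omega

/-- In a set-valued tableau of shape `ν∗(k)` whose reverse reading word is a lattice word
with content `ρ_n = (n, n-1, …, 1)`, each of the numbers `1, …, n` occurs at most once in
total among the sets filling the cells of the `(k)`-part (these cells are
`(ν.colLen 0, j)` for `j < k`). -/
theorem row_part_multiplicity_le_one (ν : YoungDiagram) (k n : ℕ) (hk : 1 ≤ k)
    (hn : 1 ≤ n) (T : SVT (starCells ν (rowShape k))) (hlat : IsLatticeWord T.word)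
    (hcont : ∀ a, 1 ≤ a → T.word.count a = staircaseContent n a) :
    ∀ a, 1 ≤ a → a ≤ n →
      ((Finset.range k).filter fun j => a ∈ T.entry (ν.colLen 0, j)).card ≤ 1 :=
  row_part_multiplicity_le_one_general ν k n T hlat hcont

end Stembridge
end

section
/- Let λ be a partition, and consider reverse plane partitions of shape λ with entries in the totally ordered alphabet x_1 < x_2 < … < y_1 < y_2 < … (every x-letter smaller than every y-letter). For every such filling P, the cells with x-entries form the Young diagram of a subpartition μ ⊆ λ, the x-part is a reverse plane partition of shape μ and the y-part is a reverse plane partition of shape λ/μ; consequently, for every pair of finitely supported sequences (w, v) of nonnegative integers, the number of such two-alphabet reverse plane partitions of shape λ in which w_i columns contain x_i and v_j columns contain y_j equals Σ_{μ ⊆ λ} (number of RPP of shape μ with weight w) · (number of RPP of shape λ/μ with weight v). In other words, g_λ(x, y) = Σ_{μ ⊆ λ} g_μ(x) g_{λ/μ}(y), i.e., Δ(g_λ) = Σ_{μ ⊆ λ} g_μ ⊗ g_{λ/μ}. -/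
/-!
Every `x`-letter is smaller than every `y`-letter and the entries of a reverse plane partition
increase weakly to the right and downwards, so the cells carrying `x`-letters form a lower set
`μ ⊆ λ`. Restricting to `μ` and to `λ/μ` and forgetting the alphabet splits a two-alphabet RPP
of shape `λ` into an RPP of shape `μ` and one of shape `λ/μ`, turning the `x`- and `y`-weights
into their weights. Conversely any such pair glues back: since `μ` is a lower set, an `x`-cell
never lies weakly below-right of a `y`-cell. So the fibre over `μ` of `P ↦ μ` is in bijection
with a product, and counting fibres gives the sum over `μ`.
-/

open Finset

namespace Stembridge

open scoped Classical

/-- A reverse plane partition of a shape with entries in the two-alphabet totally ordered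
set `x_1 < x_2 < ⋯ < y_1 < y_2 < ⋯`, encoded as `ℕ ⊕ₗ ℕ` with `x_i = inl i` and
`y_j = inr j` (indices `≥ 1`); entries weakly increase along rows and down columns.
Cells outside the shape carry the junk value `inl 0`. -/
structure RPP2 (shape : Finset (ℕ × ℕ)) where
  entry : ℕ × ℕ → ℕ ⊕ₗ ℕ
  valid : ∀ c ∈ shape, (ofLex (entry c)).elim (fun i => 1 ≤ i) fun j => 1 ≤ j
  junk_off : ∀ c, c ∉ shape → entry c = Sum.inlₗ 0
  row_le : ∀ i j, (i, j) ∈ shape → (i, j + 1) ∈ shape → entry (i, j) ≤ entry (i, j + 1)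
  col_le : ∀ i j, (i, j) ∈ shape → (i + 1, j) ∈ shape → entry (i, j) ≤ entry (i + 1, j)

/-- The `x`-weight of a two-alphabet reverse plane partition: the number of columns
containing the letter `x_i`. -/
def RPP2.xweight {shape : Finset (ℕ × ℕ)} (P : RPP2 shape) (i : ℕ) : ℕ :=
  ((shape.filter fun c => P.entry c = Sum.inlₗ i).image Prod.snd).card

/-- The `y`-weight of a two-alphabet reverse plane partition: the number of columns
containing the letter `y_j`. -/
def RPP2.yweight {shape : Finset (ℕ × ℕ)} (P : RPP2 shape) (j : ℕ) : ℕ :=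
  ((shape.filter fun c => P.entry c = Sum.inrₗ j).image Prod.snd).card

theorem RPP.entry_injective {shape : Finset (ℕ × ℕ)} :
    Function.Injective (RPP.entry : RPP shape → ℕ × ℕ → ℕ) := by
  rintro ⟨⟩ ⟨⟩ rfl
  rfl

theorem RPP2.entry_injective {shape : Finset (ℕ × ℕ)} :
    Function.Injective (RPP2.entry : RPP2 shape → ℕ × ℕ → ℕ ⊕ₗ ℕ) := by
  rintro ⟨⟩ ⟨⟩ rfl
  rfl

instance RPP.finite_weight_eq (shape : Finset (ℕ × ℕ)) (w : ℕ →₀ ℕ) :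
    Finite {P : RPP shape // ∀ i, 1 ≤ i → P.weight i = w i} := by
  have hsupp : ∀ P : {P : RPP shape // ∀ i, 1 ≤ i → P.weight i = w i}, ∀ c ∈ shape,
      P.1.entry c ∈ w.support := by
    rintro ⟨P, hP⟩ c hc
    rw [Finsupp.mem_support_iff, ← hP _ (P.pos c hc)]
    refine (card_pos.2 ⟨c.2, mem_image_of_mem Prod.snd ?_⟩).ne'
    exact mem_filter.2 ⟨hc, rfl⟩
  refine Finite.of_injective (β := shape → w.support) (fun P c => ⟨P.1.entry c, hsupp P c c.2⟩) ?_
  intro P Q h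
  refine Subtype.ext (RPP.entry_injective (funext fun c => ?_))
  by_cases hc : c ∈ shape
  · exact congrArg Subtype.val (congrFun h ⟨c, hc⟩)
  · rw [P.1.zero_off c hc, Q.1.zero_off c hc]

theorem _root_.Sum.Lex.isLeft_of_le {α β : Type*} [LE α] [LE β] {x y : α ⊕ₗ β} (h : x ≤ y)
    (hy : (ofLex y).isLeft) : (ofLex x).isLeft := by
  obtain ⟨a | b, rfl⟩ := toLex.surjective x <;> obtain ⟨a' | b', rfl⟩ := toLex.surjective y
  all_goals simp_all

/-- The index of an `x`-letter, `0` on `y`-letters (`yIndex` is dual). Read through `xIndex`, a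
two-alphabet filling is `0` on its `y`-cells and on the junk value `inl 0` off the shape, so its
restriction to the `x`-cells needs no case distinction. -/
def xIndex (x : ℕ ⊕ₗ ℕ) : ℕ := (ofLex x).elim id fun _ => 0

def yIndex (x : ℕ ⊕ₗ ℕ) : ℕ := (ofLex x).elim (fun _ => 0) id

@[simp] theorem xIndex_inlₗ (a : ℕ) : xIndex (Sum.inlₗ a) = a := rfl
@[simp] theorem xIndex_inrₗ (b : ℕ) : xIndex (Sum.inrₗ b) = 0 := rfl
@[simp] theorem yIndex_inlₗ (a : ℕ) : yIndex (Sum.inlₗ a) = 0 := rfl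
@[simp] theorem yIndex_inrₗ (b : ℕ) : yIndex (Sum.inrₗ b) = b := rfl

theorem xIndex_le_xIndex {x y : ℕ ⊕ₗ ℕ} (h : x ≤ y) (hy : (ofLex y).isLeft) :
    xIndex x ≤ xIndex y := by
  obtain ⟨a | b, rfl⟩ := toLex.surjective x <;> obtain ⟨a' | b', rfl⟩ := toLex.surjective y
  all_goals simp_all

theorem yIndex_mono : Monotone yIndex := by
  intro x y h
  obtain ⟨a | b, rfl⟩ := toLex.surjective x <;> obtain ⟨a' | b', rfl⟩ := toLex.surjective y
  all_goals simp_all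

theorem eq_inlₗ_iff {x : ℕ ⊕ₗ ℕ} {i : ℕ} : x = Sum.inlₗ i ↔ (ofLex x).isLeft ∧ xIndex x = i := by
  obtain ⟨a | b, rfl⟩ := toLex.surjective x <;> simp

theorem eq_inrₗ_iff {x : ℕ ⊕ₗ ℕ} {j : ℕ} : x = Sum.inrₗ j ↔ ¬(ofLex x).isLeft ∧ yIndex x = j := by
  obtain ⟨a | b, rfl⟩ := toLex.surjective x <;> simp

section YoungDiagram

variable {lam : YoungDiagram}

theorem RPP2.entry_le_entry_right (P : RPP2 lam.cells) {i j j' : ℕ} (h : j ≤ j')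
    (hmem : (i, j') ∈ lam.cells) : P.entry (i, j) ≤ P.entry (i, j') := by
  induction j', h using Nat.le_induction with
  | base => exact le_rfl
  | succ k _ ih =>
    have hk : (i, k) ∈ lam.cells := lam.up_left_mem le_rfl k.le_succ hmem
    exact (ih hk).trans (P.row_le i k hk hmem)

theorem RPP2.entry_le_entry_below (P : RPP2 lam.cells) {i i' j : ℕ} (h : i ≤ i')
    (hmem : (i', j) ∈ lam.cells) : P.entry (i, j) ≤ P.entry (i', j) := by
  induction i', h using Nat.le_induction with
  | base => exact le_rfl
  | succ k _ ih =>
    have hk : (k, j) ∈ lam.cells := lam.up_left_mem k.le_succ le_rfl hmem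
    exact (ih hk).trans (P.col_le k j hk hmem)

theorem RPP2.entry_mono (P : RPP2 lam.cells) {c d : ℕ × ℕ} (hcd : c ≤ d)
    (hd : d ∈ lam.cells) : P.entry c ≤ P.entry d :=
  (P.entry_le_entry_right hcd.2 (lam.up_left_mem hcd.1 le_rfl hd)).trans
    (P.entry_le_entry_below hcd.1 hd)

end YoungDiagram

def RPP2.xCells {t : Finset (ℕ × ℕ)} (P : RPP2 t) : Finset (ℕ × ℕ) :=
  t.filter fun c => (ofLex (P.entry c)).isLeft

theorem RPP2.mem_xCells {t : Finset (ℕ × ℕ)} {P : RPP2 t} {c : ℕ × ℕ} :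
    c ∈ P.xCells ↔ c ∈ t ∧ (ofLex (P.entry c)).isLeft :=
  mem_filter

theorem RPP2.isLowerSet_xCells {lam : YoungDiagram} (P : RPP2 lam.cells) :
    IsLowerSet (P.xCells : Set (ℕ × ℕ)) := by
  intro c d hdc hc
  rw [mem_coe, RPP2.mem_xCells] at hc ⊢
  exact ⟨lam.isLowerSet hdc hc.1, Sum.Lex.isLeft_of_le (P.entry_mono hdc hc.1) hc.2⟩

section Split

variable {t s : Finset (ℕ × ℕ)}

theorem RPP2.one_le_xIndex (P : RPP2 t) {c : ℕ × ℕ} (hc : c ∈ t)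
    (hl : (ofLex (P.entry c)).isLeft) : 1 ≤ xIndex (P.entry c) := by
  have h := P.valid c hc
  generalize P.entry c = x at h hl ⊢
  obtain ⟨a | b, rfl⟩ := toLex.surjective x <;> simp_all

theorem RPP2.one_le_yIndex (P : RPP2 t) {c : ℕ × ℕ} (hc : c ∈ t)
    (hr : ¬(ofLex (P.entry c)).isLeft) : 1 ≤ yIndex (P.entry c) := by
  have h := P.valid c hc
  generalize P.entry c = x at h hr ⊢
  obtain ⟨a | b, rfl⟩ := toLex.surjective x <;> simp_all

def RPP2.xPart (P : RPP2 t) (h : P.xCells = s) : RPP s where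
  entry c := xIndex (P.entry c)
  pos c hc := by
    subst h
    exact P.one_le_xIndex (mem_xCells.1 hc).1 (mem_xCells.1 hc).2
  zero_off c hc := by
    subst h
    by_cases hct : c ∈ t
    · have hr : ¬(ofLex (P.entry c)).isLeft := fun hl => hc (mem_xCells.2 ⟨hct, hl⟩)
      obtain ⟨b, hb⟩ : ∃ b, P.entry c = Sum.inrₗ b := ⟨_, eq_inrₗ_iff.2 ⟨hr, rfl⟩⟩
      rw [hb, xIndex_inrₗ]
    · rw [P.junk_off c hct, xIndex_inlₗ]
  row_le i j h1 h2 := by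
    subst h
    exact xIndex_le_xIndex (P.row_le i j (mem_xCells.1 h1).1 (mem_xCells.1 h2).1)
      (mem_xCells.1 h2).2
  col_le i j h1 h2 := by
    subst h
    exact xIndex_le_xIndex (P.col_le i j (mem_xCells.1 h1).1 (mem_xCells.1 h2).1)
      (mem_xCells.1 h2).2

def RPP2.yPart (P : RPP2 t) (h : P.xCells = s) : RPP (t \ s) where
  entry c := yIndex (P.entry c)
  pos c hc := by
    subst h
    obtain ⟨hct, hcs⟩ := mem_sdiff.1 hc
    exact P.one_le_yIndex hct fun hl => hcs (mem_xCells.2 ⟨hct, hl⟩)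
  zero_off c hc := by
    subst h
    by_cases hct : c ∈ t
    · have hl := (mem_xCells.1 (not_not.1 fun hcs => hc (mem_sdiff.2 ⟨hct, hcs⟩))).2
      obtain ⟨a, ha⟩ : ∃ a, P.entry c = Sum.inlₗ a := ⟨_, eq_inlₗ_iff.2 ⟨hl, rfl⟩⟩
      rw [ha, yIndex_inlₗ]
    · rw [P.junk_off c hct, yIndex_inlₗ]
  row_le i j h1 h2 := yIndex_mono (P.row_le i j (mem_sdiff.1 h1).1 (mem_sdiff.1 h2).1)
  col_le i j h1 h2 := yIndex_mono (P.col_le i j (mem_sdiff.1 h1).1 (mem_sdiff.1 h2).1)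

theorem RPP2.weight_xPart (P : RPP2 t) (h : P.xCells = s) (i : ℕ) :
    (P.xPart h).weight i = P.xweight i := by
  subst h
  unfold RPP.weight RPP2.xweight
  congr 2
  ext c
  rw [mem_filter, mem_filter, mem_xCells, eq_inlₗ_iff, and_assoc]
  rfl

theorem RPP2.weight_yPart (P : RPP2 t) (h : P.xCells = s) (j : ℕ) :
    (P.yPart h).weight j = P.yweight j := by
  subst h
  unfold RPP.weight RPP2.yweight
  congr 2
  ext c
  rw [mem_filter, mem_filter, mem_sdiff, mem_xCells, eq_inrₗ_iff]
  exact ⟨fun ⟨⟨hc, hl⟩, hj⟩ => ⟨hc, fun h => hl ⟨hc, h⟩, hj⟩,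
    fun ⟨hc, hl, hj⟩ => ⟨⟨hc, fun h => hl h.2⟩, hj⟩⟩

theorem glue_entry_le {a b : ℕ × ℕ → ℕ} (hs : IsLowerSet (s : Set (ℕ × ℕ))) {c d : ℕ × ℕ}
    (hcd : c ≤ d) (hd : d ∈ t) (ha : c ∈ s → d ∈ s → a c ≤ a d)
    (hb : c ∈ t \ s → d ∈ t \ s → b c ≤ b d) :
    (if c ∈ t \ s then Sum.inrₗ (b c) else Sum.inlₗ (a c)) ≤
      (if d ∈ t \ s then Sum.inrₗ (b d) else Sum.inlₗ (a d)) := by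
  by_cases hds : d ∈ s
  · have hcs : c ∈ s := hs hcd hds
    rw [if_neg fun h => (mem_sdiff.1 h).2 hcs, if_neg fun h => (mem_sdiff.1 h).2 hds]
    exact Sum.Lex.inl_le_inl_iff.2 (ha hcs hds)
  · have hd' : d ∈ t \ s := mem_sdiff.2 ⟨hd, hds⟩
    rw [if_pos hd']
    split_ifs with hc'
    · exact Sum.Lex.inr_le_inr_iff.2 (hb hc' hd')
    · exact Sum.Lex.inl_le_inr _ _

def RPP2.glue (A : RPP s) (B : RPP (t \ s)) (hst : s ⊆ t)
    (hs : IsLowerSet (s : Set (ℕ × ℕ))) : RPP2 t where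
  entry c := if c ∈ t \ s then Sum.inrₗ (B.entry c) else Sum.inlₗ (A.entry c)
  valid c hc := by
    by_cases h : c ∈ t \ s
    · rw [if_pos h]
      exact B.pos c h
    · rw [if_neg h]
      exact A.pos c (not_not.1 fun hcs => h (mem_sdiff.2 ⟨hc, hcs⟩))
  junk_off c hc := by
    simp [hc, A.zero_off c fun h => hc (hst h)]
  row_le i j _ h2 := glue_entry_le hs (Prod.mk_le_mk.2 ⟨le_rfl, j.le_succ⟩) h2
    (A.row_le i j) (B.row_le i j)
  col_le i j _ h2 := glue_entry_le hs (Prod.mk_le_mk.2 ⟨i.le_succ, le_rfl⟩) h2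
    (A.col_le i j) (B.col_le i j)

section Glue

variable (A : RPP s) (B : RPP (t \ s)) (hst : s ⊆ t) (hs : IsLowerSet (s : Set (ℕ × ℕ)))

theorem RPP2.xCells_glue : (RPP2.glue A B hst hs).xCells = s := by
  ext c
  rw [mem_xCells]
  show c ∈ t ∧
      (ofLex (if c ∈ t \ s then Sum.inrₗ (B.entry c) else Sum.inlₗ (A.entry c))).isLeft ↔ c ∈ s
  split_ifs with hc
  · simp [(mem_sdiff.1 hc).2]
  · exact ⟨fun h => not_not.1 fun hcs => hc (mem_sdiff.2 ⟨h.1, hcs⟩), fun h => ⟨hst h, rfl⟩⟩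

theorem RPP2.xPart_glue (h : (RPP2.glue A B hst hs).xCells = s) :
    (RPP2.glue A B hst hs).xPart h = A := by
  refine RPP.entry_injective (funext fun c => ?_)
  show xIndex (if c ∈ t \ s then _ else _) = A.entry c
  split_ifs with hc
  · rw [xIndex_inrₗ, A.zero_off c (mem_sdiff.1 hc).2]
  · rfl

theorem RPP2.yPart_glue (h : (RPP2.glue A B hst hs).xCells = s) :
    (RPP2.glue A B hst hs).yPart h = B := by
  refine RPP.entry_injective (funext fun c => ?_)
  show yIndex (if c ∈ t \ s then _ else _) = B.entry c
  split_ifs with hc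
  · rfl
  · rw [yIndex_inlₗ, B.zero_off c hc]

end Glue

theorem RPP2.glue_xPart_yPart (P : RPP2 t) (h : P.xCells = s) (hst : s ⊆ t)
    (hs : IsLowerSet (s : Set (ℕ × ℕ))) : RPP2.glue (P.xPart h) (P.yPart h) hst hs = P := by
  refine RPP2.entry_injective (funext fun c => ?_)
  subst h
  by_cases hc : c ∈ t \ P.xCells
  · obtain ⟨hct, hcs⟩ := mem_sdiff.1 hc
    have hr : ¬(ofLex (P.entry c)).isLeft := fun hl => hcs (mem_xCells.2 ⟨hct, hl⟩)
    simp only [glue, if_pos hc]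
    exact (eq_inrₗ_iff.2 ⟨hr, rfl⟩).symm
  · simp only [glue, if_neg hc]
    by_cases hct : c ∈ t
    · have hl := (mem_xCells.1 (not_not.1 fun hcs => hc (mem_sdiff.2 ⟨hct, hcs⟩))).2
      exact (eq_inlₗ_iff.2 ⟨hl, rfl⟩).symm
    · show Sum.inlₗ (xIndex (P.entry c)) = P.entry c
      rw [P.junk_off c hct]
      rfl

def RPP2.splitEquiv (hst : s ⊆ t) (hs : IsLowerSet (s : Set (ℕ × ℕ))) :
    {P : RPP2 t // P.xCells = s} ≃ RPP s × RPP (t \ s) where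
  toFun P := (P.1.xPart P.2, P.1.yPart P.2)
  invFun AB := ⟨RPP2.glue AB.1 AB.2 hst hs, RPP2.xCells_glue _ _ hst hs⟩
  left_inv P := Subtype.ext (RPP2.glue_xPart_yPart P.1 P.2 hst hs)
  right_inv _ := Prod.ext (RPP2.xPart_glue _ _ hst hs (RPP2.xCells_glue _ _ hst hs))
    (RPP2.yPart_glue _ _ hst hs (RPP2.xCells_glue _ _ hst hs))

end Split

theorem _root_.Nat.card_subtype_eq_sum_card_fiber {α β : Type*} {p : α → Prop} (f : α → β)
    (F : Finset β) (hf : ∀ a, p a → f a ∈ F) (hfin : ∀ b ∈ F, Finite {a // p a ∧ f a = b}) :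
    Nat.card {a // p a} = ∑ b ∈ F, Nat.card {a // p a ∧ f a = b} := by
  have : ∀ b : F, Finite {a // p a ∧ f a = b} := fun b => hfin b b.2
  let e : {a // p a} ≃ Σ b : F, {a // p a ∧ f a = b} :=
    { toFun a := ⟨⟨f a, hf a a.2⟩, a, a.2, rfl⟩
      invFun b := ⟨b.2, b.2.2.1⟩
      left_inv _ := rfl
      right_inv := by
        rintro ⟨⟨b, hb⟩, a, ha, hab : f a = b⟩
        subst hab
        rfl }
  rw [Nat.card_congr e, Nat.card_sigma, sum_coe_sort F fun b => Nat.card {a // p a ∧ f a = b}]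

def RPP2.weightedSplitEquiv {t s : Finset (ℕ × ℕ)} (w v : ℕ →₀ ℕ) (hst : s ⊆ t)
    (hs : IsLowerSet (s : Set (ℕ × ℕ))) :
    {P : RPP2 t // ((∀ i, 1 ≤ i → P.xweight i = w i) ∧ ∀ j, 1 ≤ j → P.yweight j = v j) ∧
        P.xCells = s} ≃
      {A : RPP s // ∀ i, 1 ≤ i → A.weight i = w i} ×
        {B : RPP (t \ s) // ∀ j, 1 ≤ j → B.weight j = v j} :=
  ((Equiv.subtypeEquivRight fun _ => and_comm).trans
      (Equiv.subtypeSubtypeEquivSubtypeInter _ _).symm).trans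
    (((RPP2.splitEquiv hst hs).subtypeEquiv fun P => by
      simp only [RPP2.splitEquiv, Equiv.coe_fn_mk, RPP2.weight_xPart, RPP2.weight_yPart]).trans
      Equiv.subtypeProdEquivProd)

theorem RPP2.card_eq_sum (lam : YoungDiagram) (w v : ℕ →₀ ℕ) :
    Nat.card {P : RPP2 lam.cells //
        (∀ i, 1 ≤ i → P.xweight i = w i) ∧ ∀ j, 1 ≤ j → P.yweight j = v j} =
      ∑ s ∈ lam.cells.powerset.filter (fun s : Finset (ℕ × ℕ) => IsLowerSet (s : Set (ℕ × ℕ))),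
        Nat.card {P : RPP s // ∀ i, 1 ≤ i → P.weight i = w i} *
          Nat.card {P : RPP (lam.cells \ s) // ∀ j, 1 ≤ j → P.weight j = v j} := by
  have hF : ∀ P : RPP2 lam.cells, P.xCells ∈
      lam.cells.powerset.filter fun s : Finset (ℕ × ℕ) => IsLowerSet (s : Set (ℕ × ℕ)) :=
    fun P => mem_filter.2 ⟨mem_powerset.2 (filter_subset _ _), P.isLowerSet_xCells⟩
  rw [Nat.card_subtype_eq_sum_card_fiber RPP2.xCells _ (fun P _ => hF P) fun s hs =>
    Finite.of_equiv _ (RPP2.weightedSplitEquiv w v (mem_powerset.1 (mem_filter.1 hs).1)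
      (mem_filter.1 hs).2).symm]
  refine sum_congr rfl fun s hs => ?_
  rw [Nat.card_congr (RPP2.weightedSplitEquiv w v (mem_powerset.1 (mem_filter.1 hs).1)
    (mem_filter.1 hs).2), Nat.card_prod]

/-- `Δ(g_λ) = Σ_{μ ⊆ λ} g_μ ⊗ g_{λ/μ}`: in any reverse plane partition of shape `λ` over
the two-alphabet `x_1 < x_2 < ⋯ < y_1 < y_2 < ⋯`, the cells carrying `x`-letters form the
Young diagram of a subpartition `μ ⊆ λ` (a lower set of cells); consequently, for all
finitely supported sequences `w, v`, the number of such two-alphabet reverse plane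
partitions of shape `λ` in which `w i` columns contain `x_i` and `v j` columns contain
`y_j` equals `Σ_{μ ⊆ λ}` (#RPP of shape `μ` with weight `w`) · (#RPP of shape `λ/μ` with
weight `v`), the sum running over the lower subsets `s ⊆ λ.cells`. -/
theorem comul_dual_grothendieck (lam : YoungDiagram) (w v : ℕ →₀ ℕ) :
    (∀ P : RPP2 lam.cells,
      IsLowerSet {c : ℕ × ℕ | c ∈ lam.cells ∧ (ofLex (P.entry c)).isLeft = true}) ∧
    Nat.card {P : RPP2 lam.cells //
        (∀ i, 1 ≤ i → P.xweight i = w i) ∧ ∀ j, 1 ≤ j → P.yweight j = v j} =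
      ∑ s ∈ lam.cells.powerset.filter (fun s : Finset (ℕ × ℕ) => IsLowerSet (s : Set (ℕ × ℕ))),
        Nat.card {P : RPP s // ∀ i, 1 ≤ i → P.weight i = w i} *
          Nat.card {P : RPP (lam.cells \ s) // ∀ j, 1 ≤ j → P.weight j = v j} :=
  ⟨fun P => by simpa only [RPP2.xCells, coe_filter] using P.isLowerSet_xCells,
    RPP2.card_eq_sum lam w v⟩

end Stembridge
end
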